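/- arXiv:math/0612103 — 4 statements merged into one kernel-verified Lean document; each statement's English description precedes it below -/
import Mathlib

section
/- (Riesz–Fejér) If p(e^{iθ}) = Σ_{j=-d}^{d} c_j e^{ijθ} is a trigonometric polynomial taking non-negative real values for all θ ∈ [0, 2π], then there exists a polynomial q(z) = Σ_{j=0}^{d} a_j z^j with complex coefficients such that p(e^{iθ}) = |q(e^{iθ})|² for all θ. -/
open Complex Polynomial Finset

lemma trig_zero (n : ℕ) (d : ℤ) (b : ℕ → ℂ)
    (h : ∀ θ : ℝ, ∑ k ∈ Finset.range n, b k * Complex.exp (Complex.I * ((k : ℤ) - d) * θ) = 0) :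
    ∀ k < n, b k = 0 := by
  intro k₀ hk₀
  have key : ∀ θ : ℝ, ∑ k ∈ Finset.range n,
      b k * Complex.exp ((Complex.I * ((k : ℤ) - (k₀ : ℤ))) * θ) = 0 := by
    intro θ
    have h1 := h θ
    have : ∑ k ∈ Finset.range n, b k * Complex.exp ((Complex.I * ((k : ℤ) - (k₀ : ℤ))) * θ)
        = (∑ k ∈ Finset.range n, b k * Complex.exp (Complex.I * ((k : ℤ) - d) * θ))
          * Complex.exp (-(Complex.I * ((k₀ : ℤ) - d)) * θ) := by
      rw [Finset.sum_mul]
      refine Finset.sum_congr rfl fun k _ => ?_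
      simp only [mul_assoc, ← Complex.exp_add]
      congr 1
      push_cast
      ring
    rw [this, h1, zero_mul]
  -- integrate both sides over [0, 2π]
  have hint : ∀ k : ℕ, (∫ θ in (0:ℝ)..(2 * Real.pi),
      b k * Complex.exp ((Complex.I * ((k : ℤ) - (k₀ : ℤ))) * θ))
      = if k = k₀ then b k * (2 * Real.pi) else 0 := by
    intro k
    by_cases hk : k = k₀
    · subst hk
      simp [intervalIntegral.integral_const_mul, Complex.ofReal_mul]
      ring
    · have hc : (Complex.I * ((k : ℤ) - (k₀ : ℤ))) ≠ 0 := by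
        simp only [ne_eq, mul_eq_zero, Complex.I_ne_zero, false_or, sub_eq_zero]
        exact_mod_cast fun hh => hk (by exact_mod_cast hh)
      rw [intervalIntegral.integral_const_mul, if_neg hk]
      rw [integral_exp_mul_complex hc]
      have harg : Complex.I * (((k : ℤ) : ℂ) - ((k₀ : ℤ) : ℂ)) * (((2 * Real.pi : ℝ)) : ℂ)
          = (((k : ℤ) - (k₀ : ℤ) : ℤ) : ℂ) * (2 * Real.pi * Complex.I) := by
        push_cast
        ring
      rw [harg, Complex.exp_int_mul_two_pi_mul_I]
      simp
  have hInt : ∀ k : ℕ, IntervalIntegrable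
      (fun θ : ℝ => b k * Complex.exp ((Complex.I * ((k : ℤ) - (k₀ : ℤ))) * θ))
      MeasureTheory.volume 0 (2 * Real.pi) := by
    intro k
    apply Continuous.intervalIntegrable
    fun_prop
  have h0 : (∫ θ in (0:ℝ)..(2 * Real.pi), ∑ k ∈ Finset.range n,
      b k * Complex.exp ((Complex.I * ((k : ℤ) - (k₀ : ℤ))) * θ)) = 0 := by
    simp only [key]
    simp
  rw [intervalIntegral.integral_finset_sum (fun k _ => hInt k)] at h0
  simp only [hint] at h0
  rw [Finset.sum_ite_eq' (Finset.range n) k₀] at h0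
  simp only [Finset.mem_range, hk₀, if_true] at h0
  rcases mul_eq_zero.mp h0 with h2 | h2
  · exact h2
  · exfalso
    have : (2 * Real.pi : ℝ) = 0 := by exact_mod_cast h2
    simp [Real.pi_ne_zero] at this

-- representation of the twisted evaluation as a trig sum
lemma g_sum (m n : ℕ) (P : Polynomial ℂ) (hn : P.natDegree < n) (θ : ℝ) :
    Complex.exp (-(Complex.I * m * θ)) * P.eval (Complex.exp (Complex.I * θ))
      = ∑ k ∈ Finset.range n, P.coeff k * Complex.exp (Complex.I * ((k : ℤ) - (m : ℤ)) * θ) := by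
  rw [Polynomial.eval_eq_sum_range' hn, Finset.mul_sum]
  refine Finset.sum_congr rfl fun k _ => ?_
  have hpow : (Complex.exp (Complex.I * θ)) ^ k = Complex.exp (Complex.I * k * θ) := by
    rw [← Complex.exp_nat_mul]
    ring_nf
  rw [hpow, mul_comm (Complex.exp (-(Complex.I * m * θ))), mul_assoc, ← Complex.exp_add]
  congr 2
  push_cast
  ring

lemma symm_coeff (m : ℕ) (P : Polynomial ℂ) (hdeg : P.natDegree ≤ 2 * m)
    (h : ∀ θ : ℝ, (Complex.exp (-(Complex.I * m * θ)) * P.eval (Complex.exp (Complex.I * θ))).im = 0) :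
    ∀ k ≤ 2 * m, P.coeff k = (starRingEnd ℂ) (P.coeff (2 * m - k)) := by
  have hn : P.natDegree < 2 * m + 1 := Nat.lt_succ_of_le hdeg
  have hz : ∀ θ : ℝ, ∑ k ∈ Finset.range (2 * m + 1),
      (P.coeff k - (starRingEnd ℂ) (P.coeff (2 * m - k))) *
        Complex.exp (Complex.I * ((k : ℤ) - (m : ℤ)) * θ) = 0 := by
    intro θ
    have hg := g_sum m (2 * m + 1) P hn θ
    have hreal : (starRingEnd ℂ) (Complex.exp (-(Complex.I * m * θ)) *
        P.eval (Complex.exp (Complex.I * θ))) =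
        Complex.exp (-(Complex.I * m * θ)) * P.eval (Complex.exp (Complex.I * θ)) :=
      Complex.conj_eq_iff_im.mpr (h θ)
    -- conj of the sum equals reflected sum
    have hconj : (starRingEnd ℂ) (∑ k ∈ Finset.range (2 * m + 1),
        P.coeff k * Complex.exp (Complex.I * ((k : ℤ) - (m : ℤ)) * θ))
        = ∑ k ∈ Finset.range (2 * m + 1),
          (starRingEnd ℂ) (P.coeff (2 * m - k)) * Complex.exp (Complex.I * ((k : ℤ) - (m : ℤ)) * θ) := by
      rw [map_sum]
      rw [← Finset.sum_range_reflect
        (fun k => (starRingEnd ℂ) (P.coeff (2 * m - k)) * Complex.exp (Complex.I * ((k : ℤ) - (m : ℤ)) * θ))]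
      refine Finset.sum_congr rfl fun k hk => ?_
      rw [Finset.mem_range] at hk
      have h1 : 2 * m + 1 - 1 - k = 2 * m - k := by omega
      rw [h1]
      have h2 : 2 * m - (2 * m - k) = k := by omega
      rw [h2, map_mul]
      congr 1
      rw [← Complex.exp_conj]
      congr 1
      have hk' : ((2 * m - k : ℕ) : ℤ) = 2 * (m : ℤ) - k := by omega
      simp only [map_mul, Complex.conj_I, map_sub, Complex.conj_ofReal, map_natCast, map_intCast]
      rw [hk']
      push_cast
      ring
    simp only [sub_mul]
    rw [Finset.sum_sub_distrib]
    rw [← hg, ← hconj, ← hg, hreal, sub_self]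
  intro k hk
  have := trig_zero (2 * m + 1) (m : ℤ) _ hz k (by omega)
  exact sub_eq_zero.mp this

lemma reflected_root (m : ℕ) (P : Polynomial ℂ) (hdeg : P.natDegree ≤ 2 * m)
    (hsymm : ∀ k ≤ 2 * m, P.coeff k = (starRingEnd ℂ) (P.coeff (2 * m - k)))
    (w : ℂ) (hw : w ≠ 0) (hroot : P.eval w = 0) :
    P.eval (((starRingEnd ℂ) w)⁻¹) = 0 := by
  have hn : P.natDegree < 2 * m + 1 := Nat.lt_succ_of_le hdeg
  obtain ⟨v, hv⟩ : ∃ v : ℂ, v = ((starRingEnd ℂ) w)⁻¹ := ⟨_, rfl⟩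
  rw [← hv]
  have hvne : v ≠ 0 := by simp [hv, hw]
  have hcw : (starRingEnd ℂ) w = v⁻¹ := by rw [hv, inv_inv]
  rw [Polynomial.eval_eq_sum_range' hn]
  have key : ∀ k ∈ Finset.range (2 * m + 1), P.coeff k * v ^ k
      = (starRingEnd ℂ) ((starRingEnd ℂ) (P.coeff k) * (w⁻¹) ^ (2 * m) * w ^ (2 * m - k)) := by
    intro k hk
    rw [Finset.mem_range] at hk
    have hvp : v ^ (2 * m) * (v⁻¹) ^ (2 * m - k) = v ^ k := by
      rw [inv_pow, ← div_eq_mul_inv, div_eq_iff (pow_ne_zero _ hvne), ← pow_add]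
      congr 1
      omega
    simp only [map_mul, map_pow, map_inv₀, Complex.conj_conj, hcw, inv_inv]
    rw [mul_assoc, hvp]
  rw [Finset.sum_congr rfl key, ← map_sum]
  have step : ∑ k ∈ Finset.range (2 * m + 1),
      (starRingEnd ℂ) (P.coeff k) * (w⁻¹) ^ (2 * m) * w ^ (2 * m - k)
      = (w⁻¹) ^ (2 * m) * ∑ k ∈ Finset.range (2 * m + 1), (starRingEnd ℂ) (P.coeff k) * w ^ (2 * m - k) := by
    rw [Finset.mul_sum]
    exact Finset.sum_congr rfl fun k _ => by ring
  rw [step]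
  have step2 : ∑ k ∈ Finset.range (2 * m + 1), (starRingEnd ℂ) (P.coeff k) * w ^ (2 * m - k)
      = ∑ k ∈ Finset.range (2 * m + 1), P.coeff (2 * m - k) * w ^ (2 * m - k) := by
    refine Finset.sum_congr rfl fun k hk => ?_
    rw [Finset.mem_range] at hk
    congr 1
    rw [hsymm k (by omega), Complex.conj_conj]
  have hsum0 : ∑ k ∈ Finset.range (2 * m + 1), P.coeff (2 * m - k) * w ^ (2 * m - k) = 0 := by
    have e1 : ∀ k ∈ Finset.range (2 * m + 1), P.coeff (2 * m - k) * w ^ (2 * m - k)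
        = (fun j => P.coeff j * w ^ j) (2 * m + 1 - 1 - k) := by
      intro k hk
      simp only []
      have : 2 * m + 1 - 1 - k = 2 * m - k := by omega
      rw [this]
    rw [Finset.sum_congr rfl e1, Finset.sum_range_reflect (fun j => P.coeff j * w ^ j) (2 * m + 1), ← Polynomial.eval_eq_sum_range' hn, hroot]
  rw [step2, hsum0, mul_zero, map_zero]

lemma deriv_root (m : ℕ) (P : Polynomial ℂ)
    (hIm : ∀ θ : ℝ, (Complex.exp (-(Complex.I * m * θ)) * P.eval (Complex.exp (Complex.I * θ))).im = 0)
    (hRe : ∀ θ : ℝ, 0 ≤ (Complex.exp (-(Complex.I * m * θ)) * P.eval (Complex.exp (Complex.I * θ))).re)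
    (w : ℂ) (hw1 : ‖w‖ = 1) (hroot : P.eval w = 0) :
    P.derivative.eval w = 0 := by
  set g : ℝ → ℂ := fun θ => Complex.exp (-(Complex.I * m * θ)) * P.eval (Complex.exp (Complex.I * θ)) with hgdef
  have hwne : w ≠ 0 := by
    intro h; rw [h] at hw1; simp at hw1
  set φ : ℝ := w.arg with hφ
  have hwe : Complex.exp (Complex.I * φ) = w := by
    have := Complex.norm_mul_exp_arg_mul_I w
    rw [hw1] at this
    simpa [mul_comm] using this
  -- derivative of θ ↦ (θ : ℂ)
  have h1 : ∀ x : ℝ, HasDerivAt (fun θ : ℝ => (θ : ℂ)) 1 x := by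
    intro x
    simpa using (hasDerivAt_id x).ofReal_comp
  -- derivative of first factor
  have hA : HasDerivAt (fun θ : ℝ => Complex.exp (-(Complex.I * m * θ)))
      (Complex.exp (-(Complex.I * m * φ)) * (-(Complex.I * m))) φ := by
    have hinner : HasDerivAt (fun θ : ℝ => -(Complex.I * m * (θ : ℂ))) (-(Complex.I * m)) φ := by
      simpa [Pi.neg_def] using ((h1 φ).const_mul (Complex.I * m)).neg
    exact hinner.cexp
  -- derivative of second factor
  have hexp : HasDerivAt (fun θ : ℝ => Complex.exp (Complex.I * θ))
      (Complex.exp (Complex.I * φ) * Complex.I) φ := by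
    have hinner : HasDerivAt (fun θ : ℝ => Complex.I * (θ : ℂ)) Complex.I φ := by
      simpa using (h1 φ).const_mul Complex.I
    exact hinner.cexp
  have hB : HasDerivAt (fun θ : ℝ => P.eval (Complex.exp (Complex.I * θ)))
      (P.derivative.eval (Complex.exp (Complex.I * φ)) * (Complex.exp (Complex.I * φ) * Complex.I)) φ := by
    exact (P.hasDerivAt (Complex.exp (Complex.I * φ))).comp φ hexp
  set z : ℂ := Complex.exp (-(Complex.I * m * φ)) * (-(Complex.I * m)) *
      P.eval (Complex.exp (Complex.I * φ)) +
      Complex.exp (-(Complex.I * m * φ)) *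
      (P.derivative.eval (Complex.exp (Complex.I * φ)) * (Complex.exp (Complex.I * φ) * Complex.I)) with hzdef
  have hg : HasDerivAt g z φ := hA.mul hB
  have hgφ : g φ = 0 := by
    rw [hgdef]
    simp only [hwe, hroot, mul_zero]
  -- imaginary part of derivative vanishes
  have hzim : z.im = 0 := by
    have him : HasDerivAt (fun θ : ℝ => (g θ).im) z.im φ :=
      Complex.imCLM.hasFDerivAt.comp_hasDerivAt φ hg
    have hconst : (fun θ : ℝ => (g θ).im) = fun _ => (0 : ℝ) := funext hIm
    rw [hconst] at him
    exact him.unique (hasDerivAt_const φ 0)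
  -- real part of derivative vanishes (local min)
  have hzre : z.re = 0 := by
    have hre : HasDerivAt (fun θ : ℝ => (g θ).re) z.re φ :=
      Complex.reCLM.hasFDerivAt.comp_hasDerivAt φ hg
    have hmin : IsLocalMin (fun θ : ℝ => (g θ).re) φ := by
      apply Filter.Eventually.of_forall
      intro θ
      simp only [hgφ, Complex.zero_re]
      exact hRe θ
    exact hmin.hasDerivAt_eq_zero hre
  have hz0 : z = 0 := Complex.ext hzre hzim
  rw [hzdef, hwe, hroot, mul_zero, zero_add] at hz0
  rcases mul_eq_zero.mp hz0 with h | h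
  · exact absurd h (Complex.exp_ne_zero _)
  · rcases mul_eq_zero.mp h with h2 | h2
    · exact h2
    · exfalso
      rcases mul_eq_zero.mp h2 with h3 | h3
      · exact hwne h3
      · exact Complex.I_ne_zero h3

lemma transfer (m : ℕ) (P₁ : Polynomial ℂ) (w : ℂ)
    (h : ∀ θ : ℝ,
      (((Complex.normSq (Complex.exp (Complex.I * θ) - w) : ℝ) : ℂ) *
        (Complex.exp (-(Complex.I * m * θ)) * P₁.eval (Complex.exp (Complex.I * θ)))).im = 0 ∧
      0 ≤ (((Complex.normSq (Complex.exp (Complex.I * θ) - w) : ℝ) : ℂ) *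
        (Complex.exp (-(Complex.I * m * θ)) * P₁.eval (Complex.exp (Complex.I * θ)))).re) :
    ∀ θ : ℝ,
      (Complex.exp (-(Complex.I * m * θ)) * P₁.eval (Complex.exp (Complex.I * θ))).im = 0 ∧
      0 ≤ (Complex.exp (-(Complex.I * m * θ)) * P₁.eval (Complex.exp (Complex.I * θ))).re := by
  set g : ℝ → ℂ := fun θ => Complex.exp (-(Complex.I * m * θ)) * P₁.eval (Complex.exp (Complex.I * θ))
    with hgdef
  have hcont : Continuous g := by
    apply Continuous.mul
    · apply Complex.continuous_exp.comp
      fun_prop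
    · exact P₁.continuous.comp (Complex.continuous_exp.comp (by fun_prop))
  have hgood : ∀ θ : ℝ, Complex.exp (Complex.I * θ) ≠ w → (g θ).im = 0 ∧ 0 ≤ (g θ).re := by
    intro θ hθ
    obtain ⟨h1, h2⟩ := h θ
    have ht : 0 < Complex.normSq (Complex.exp (Complex.I * θ) - w) :=
      Complex.normSq_pos.mpr (sub_ne_zero.mpr hθ)
    rw [Complex.im_ofReal_mul] at h1
    rw [Complex.re_ofReal_mul] at h2
    simp only [hgdef]
    constructor
    · have := mul_eq_zero.mp h1
      rcases this with h3 | h3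
      · exact absurd h3 (ne_of_gt ht)
      · exact h3
    · nlinarith [ht]
  intro θ₀
  by_cases hθ₀ : Complex.exp (Complex.I * θ₀) = w
  · -- approximate by nearby points
    set u : ℕ → ℝ := fun n => θ₀ + 1 / (n + 1) with hudef
    have hu : Filter.Tendsto u Filter.atTop (nhds θ₀) := by
      have h0 : Filter.Tendsto (fun n : ℕ => 1 / ((n : ℝ) + 1)) Filter.atTop (nhds 0) :=
        tendsto_one_div_add_atTop_nhds_zero_nat
      have := Filter.Tendsto.const_add θ₀ h0
      simpa [hudef] using this
    have hune : ∀ n : ℕ, Complex.exp (Complex.I * (u n)) ≠ w := by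
      intro n hc
      rw [← hθ₀] at hc
      have : Complex.exp (Complex.I * (u n) - Complex.I * θ₀) = 1 := by
        rw [Complex.exp_sub, hc, div_self (Complex.exp_ne_zero _)]
      rw [Complex.exp_eq_one_iff] at this
      obtain ⟨k, hk⟩ := this
      have harg : Complex.I * (u n) - Complex.I * θ₀ = Complex.I * ((1 : ℝ) / (n + 1) : ℝ) := by
        rw [hudef]
        push_cast
        ring
      rw [harg] at hk
      -- compare imaginary parts
      have hk' : Complex.I * (((1 : ℝ) / (n + 1) : ℝ) : ℂ)
          = Complex.I * ((((k : ℝ) * (2 * Real.pi)) : ℝ) : ℂ) := by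
        rw [hk]; push_cast; ring
      have him : ((1 : ℝ) / (n + 1)) = (k : ℝ) * (2 * Real.pi) := by
        have := mul_left_cancel₀ Complex.I_ne_zero hk'
        exact_mod_cast this
      have hpos : (0 : ℝ) < 1 / (n + 1) := by positivity
      have hle : (1 : ℝ) / (n + 1) ≤ 1 := by
        rw [div_le_one (by positivity)]
        linarith [Nat.cast_nonneg (α := ℝ) n]
      have hpi := Real.pi_gt_three
      rcases le_or_gt (k : ℝ) 0 with hk0 | hk0
      · nlinarith
      · have : (1 : ℝ) ≤ (k : ℝ) := by exact_mod_cast hk0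
        nlinarith
    have htend : Filter.Tendsto (fun n => g (u n)) Filter.atTop (nhds (g θ₀)) :=
      (hcont.tendsto θ₀).comp hu
    constructor
    · have him : Filter.Tendsto (fun n => (g (u n)).im) Filter.atTop (nhds ((g θ₀).im)) :=
        (Complex.continuous_im.tendsto _).comp htend
      have hconst : (fun n => (g (u n)).im) = fun _ => (0 : ℝ) :=
        funext fun n => (hgood (u n) (hune n)).1
      rw [hconst] at him
      exact tendsto_nhds_unique him tendsto_const_nhds
    · have hre : Filter.Tendsto (fun n => (g (u n)).re) Filter.atTop (nhds ((g θ₀).re)) :=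
        (Complex.continuous_re.tendsto _).comp htend
      exact ge_of_tendsto' hre (fun n => (hgood (u n) (hune n)).2)
  · exact hgood θ₀ hθ₀

lemma key : ∀ (m : ℕ) (P : Polynomial ℂ), P.natDegree ≤ 2 * m →
    (∀ θ : ℝ, (Complex.exp (-(Complex.I * m * θ)) * P.eval (Complex.exp (Complex.I * θ))).im = 0 ∧
      0 ≤ (Complex.exp (-(Complex.I * m * θ)) * P.eval (Complex.exp (Complex.I * θ))).re) →
    ∃ Q : Polynomial ℂ, Q.natDegree ≤ m ∧ ∀ θ : ℝ,
      Complex.exp (-(Complex.I * m * θ)) * P.eval (Complex.exp (Complex.I * θ))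
        = ((Complex.normSq (Q.eval (Complex.exp (Complex.I * θ))) : ℝ) : ℂ) := by
  intro m
  induction m with
  | zero =>
    intro P hdeg hyp
    have hP : P = C (P.coeff 0) := Polynomial.eq_C_of_natDegree_le_zero (by omega)
    obtain ⟨h1, h2⟩ := hyp 0
    have hsimp : ∀ θ : ℝ, Complex.exp (-(Complex.I * (0 : ℕ) * θ)) * P.eval (Complex.exp (Complex.I * θ))
        = P.coeff 0 := by
      intro θ
      rw [hP]
      simp
    rw [hsimp 0] at h1 h2
    refine ⟨C ((Real.sqrt ((P.coeff 0).re) : ℝ) : ℂ), by simp, fun θ => ?_⟩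
    rw [hsimp θ]
    simp only [Polynomial.eval_C]
    rw [Complex.normSq_ofReal, Real.mul_self_sqrt h2]
    rw [Complex.ext_iff]
    exact ⟨by simp, by simp [h1]⟩
  | succ m IH =>
    intro P hdeg hyp
    have hIm : ∀ θ : ℝ, (Complex.exp (-(Complex.I * (m + 1 : ℕ) * θ)) * P.eval (Complex.exp (Complex.I * θ))).im = 0 :=
      fun θ => (hyp θ).1
    have hRe : ∀ θ : ℝ, 0 ≤ (Complex.exp (-(Complex.I * (m + 1 : ℕ) * θ)) * P.eval (Complex.exp (Complex.I * θ))).re :=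
      fun θ => (hyp θ).2
    have hsymm := symm_coeff (m + 1) P hdeg hIm
    by_cases hA : P.coeff (2 * (m + 1)) = 0
    · -- leading coeff zero: P = X * divX P, reduce degree
      have hc0 : P.coeff 0 = 0 := by
        have := hsymm 0 (by omega)
        simpa [hA] using this
      have hPX : X * P.divX = P := by
        have := Polynomial.X_mul_divX_add P
        rwa [hc0, Polynomial.C_0, add_zero] at this
      have hdeg₁ : (P.divX).natDegree ≤ 2 * m := by
        rw [Polynomial.natDegree_le_iff_coeff_eq_zero]
        intro N hN
        rw [Polynomial.coeff_divX]
        rcases Nat.lt_or_ge (2 * (m + 1)) (N + 1) with h | h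
        · exact Polynomial.coeff_eq_zero_of_natDegree_lt (by omega)
        · have : N + 1 = 2 * (m + 1) := by omega
          rw [this]; exact hA
      have heq : ∀ θ : ℝ, Complex.exp (-(Complex.I * (m + 1 : ℕ) * θ)) * P.eval (Complex.exp (Complex.I * θ))
          = Complex.exp (-(Complex.I * (m : ℕ) * θ)) * (P.divX).eval (Complex.exp (Complex.I * θ)) := by
        intro θ
        conv_lhs => rw [← hPX]
        simp only [Polynomial.eval_mul, Polynomial.eval_X]
        rw [← mul_assoc, ← Complex.exp_add]
        congr 2
        push_cast
        ring
      obtain ⟨Q, hQdeg, hQ⟩ := IH P.divX hdeg₁ (fun θ => by rw [← heq θ]; exact hyp θ)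
      exact ⟨Q, by omega, fun θ => by rw [heq θ]; exact hQ θ⟩
    · -- leading coeff nonzero: extract a root pair
      have hc0 : P.coeff 0 ≠ 0 := by
        have := hsymm 0 (by omega)
        simp only [Nat.sub_zero] at this
        rw [this]
        simpa using hA
      have hPne : P ≠ 0 := fun h => hc0 (by simp [h])
      have hdegP : P.natDegree = 2 * (m + 1) :=
        le_antisymm hdeg (Polynomial.le_natDegree_of_ne_zero hA)
      have hdpos : 0 < P.degree :=
        Polynomial.natDegree_pos_iff_degree_pos.mp (by omega)
      obtain ⟨w, hw⟩ := Complex.exists_root hdpos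
      rw [Polynomial.IsRoot] at hw
      have hwne : w ≠ 0 := by
        intro h
        rw [h, ← Polynomial.coeff_zero_eq_eval_zero] at hw
        exact hc0 hw
      -- produce P₁ with the factorization identity
      have main : ∃ P₁ : Polynomial ℂ, P₁.natDegree ≤ 2 * m ∧ ∀ θ : ℝ,
          Complex.exp (-(Complex.I * (m + 1 : ℕ) * θ)) * P.eval (Complex.exp (Complex.I * θ))
          = ((Complex.normSq (Complex.exp (Complex.I * θ) - w) : ℝ) : ℂ) *
            (Complex.exp (-(Complex.I * (m : ℕ) * θ)) * P₁.eval (Complex.exp (Complex.I * θ))) := by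
        by_cases habs : ‖w‖ = 1
        · -- circle root: double root
          have hd := deriv_root (m + 1) P hIm hRe w habs hw
          obtain ⟨S, hS⟩ := (Polynomial.dvd_iff_isRoot.mpr hw)
          have hSw : S.eval w = 0 := by
            have := congrArg (fun p => Polynomial.eval w (Polynomial.derivative p)) hS
            simp only [Polynomial.derivative_mul, Polynomial.eval_add, Polynomial.eval_mul,
              Polynomial.derivative_sub, Polynomial.derivative_X, Polynomial.derivative_C,
              Polynomial.eval_sub, Polynomial.eval_X, Polynomial.eval_C, sub_self, sub_zero,
              Polynomial.eval_one, one_mul, zero_mul, mul_zero, add_zero, zero_add] at this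
            rw [hd] at this
            exact this.symm
          obtain ⟨R, hR⟩ := (Polynomial.dvd_iff_isRoot.mpr hSw)
          have hP2 : P = (X - C w) ^ 2 * R := by
            rw [hS, hR]; ring
          have hRne : R ≠ 0 := fun h => hPne (by rw [hP2, h, mul_zero])
          have hRdeg : R.natDegree = 2 * m := by
            have h1 : ((X - C w) ^ 2 * R).natDegree = ((X - C w) ^ 2).natDegree + R.natDegree :=
              Polynomial.natDegree_mul (pow_ne_zero _ (Polynomial.X_sub_C_ne_zero w)) hRne
            have h2 : ((X - C w) ^ 2).natDegree = 2 := by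
              rw [Polynomial.natDegree_pow, Polynomial.natDegree_X_sub_C]
            rw [← hP2, hdegP, h2] at h1
            omega
          refine ⟨C (-w) * R, ?_, fun θ => ?_⟩
          · calc (C (-w) * R).natDegree ≤ (C (-w)).natDegree + R.natDegree := Polynomial.natDegree_mul_le
              _ ≤ 2 * m := by simp [hRdeg]
          · obtain ⟨z, hz⟩ : ∃ z : ℂ, z = Complex.exp (Complex.I * θ) := ⟨_, rfl⟩
            rw [← hz]
            have hzne : z ≠ 0 := by rw [hz]; exact Complex.exp_ne_zero _
            have hz1 : z * (starRingEnd ℂ) z = 1 := by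
              rw [Complex.mul_conj, hz]
              norm_cast
              rw [Complex.normSq_eq_norm_sq, Complex.norm_exp]
              simp
            have hw1' : w * (starRingEnd ℂ) w = 1 := by
              rw [Complex.mul_conj]
              norm_cast
              rw [Complex.normSq_eq_norm_sq, habs]
              norm_num
            have hns : ((Complex.normSq (z - w) : ℝ) : ℂ) = (z - w) * ((starRingEnd ℂ) z - (starRingEnd ℂ) w) := by
              rw [← map_sub, Complex.mul_conj]
            have hzsq : (z - w) ^ 2 = -w * z * ((Complex.normSq (z - w) : ℝ) : ℂ) := by
              rw [hns]
              linear_combination (z - w) * w * hz1 - (z - w) * z * hw1'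
            have hab : Complex.exp (-(Complex.I * (m + 1 : ℕ) * θ)) * z
                = Complex.exp (-(Complex.I * (m : ℕ) * θ)) := by
              rw [hz, ← Complex.exp_add]
              congr 1
              push_cast
              ring
            rw [hP2]
            simp only [Polynomial.eval_mul, Polynomial.eval_pow, Polynomial.eval_sub,
              Polynomial.eval_X, Polynomial.eval_C, Polynomial.eval_neg]
            rw [hzsq, ← hab]
            ring
        · -- off-circle root: reflected root
          obtain ⟨v, hv⟩ : ∃ v : ℂ, v = ((starRingEnd ℂ) w)⁻¹ := ⟨_, rfl⟩
          have hvroot : P.eval v = 0 := by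
            rw [hv]; exact reflected_root (m + 1) P hdeg hsymm w hwne hw
          have hvne : v ≠ 0 := by simp [hv, hwne]
          have hcne : (starRingEnd ℂ) w ≠ 0 := by simpa using hwne
          have hvw : v * (starRingEnd ℂ) w = 1 := by
            rw [hv]
            field_simp
          have hvnew : v ≠ w := by
            intro h
            apply habs
            have : w * (starRingEnd ℂ) w = 1 := by rw [h] at hvw; exact hvw
            have h2 : (Complex.normSq w : ℂ) = 1 := by rw [← Complex.mul_conj]; exact this
            have h3 : Complex.normSq w = 1 := by exact_mod_cast h2
            rw [← Complex.sq_norm] at h3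
            nlinarith [norm_nonneg w]
          have hcop : IsCoprime (X - C w) (X - C v) :=
            Polynomial.isCoprime_X_sub_C_of_isUnit_sub (sub_ne_zero_of_ne (Ne.symm hvnew)).isUnit
          have hdvd : (X - C w) * (X - C v) ∣ P :=
            hcop.mul_dvd (Polynomial.dvd_iff_isRoot.mpr hw) (Polynomial.dvd_iff_isRoot.mpr hvroot)
          obtain ⟨R, hR⟩ := hdvd
          have hRne : R ≠ 0 := fun h => hPne (by rw [hR, h, mul_zero])
          have hRdeg : R.natDegree = 2 * m := by
            have h1 : ((X - C w) * (X - C v) * R).natDegree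
                = ((X - C w) * (X - C v)).natDegree + R.natDegree :=
              Polynomial.natDegree_mul
                (mul_ne_zero (Polynomial.X_sub_C_ne_zero w) (Polynomial.X_sub_C_ne_zero v)) hRne
            have h2 : ((X - C w) * (X - C v)).natDegree = 2 := by
              rw [Polynomial.natDegree_mul (Polynomial.X_sub_C_ne_zero w) (Polynomial.X_sub_C_ne_zero v),
                Polynomial.natDegree_X_sub_C, Polynomial.natDegree_X_sub_C]
            rw [← hR, hdegP, h2] at h1
            omega
          refine ⟨C (-v) * R, ?_, fun θ => ?_⟩
          · calc (C (-v) * R).natDegree ≤ (C (-v)).natDegree + R.natDegree := Polynomial.natDegree_mul_le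
              _ ≤ 2 * m := by simp [hRdeg]
          · obtain ⟨z, hz⟩ : ∃ z : ℂ, z = Complex.exp (Complex.I * θ) := ⟨_, rfl⟩
            rw [← hz]
            have hzne : z ≠ 0 := by rw [hz]; exact Complex.exp_ne_zero _
            have hz1 : z * (starRingEnd ℂ) z = 1 := by
              rw [Complex.mul_conj, hz]
              norm_cast
              rw [Complex.normSq_eq_norm_sq, Complex.norm_exp]
              simp
            have hns : ((Complex.normSq (z - w) : ℝ) : ℂ) = (z - w) * ((starRingEnd ℂ) z - (starRingEnd ℂ) w) := by
              rw [← map_sub, Complex.mul_conj]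
            have hzsq : (z - w) * (z - v) = -v * z * ((Complex.normSq (z - w) : ℝ) : ℂ) := by
              rw [hns]
              linear_combination (z - w) * v * hz1 - (z - w) * z * hvw
            have hab : Complex.exp (-(Complex.I * (m + 1 : ℕ) * θ)) * z
                = Complex.exp (-(Complex.I * (m : ℕ) * θ)) := by
              rw [hz, ← Complex.exp_add]
              congr 1
              push_cast
              ring
            rw [hR]
            simp only [Polynomial.eval_mul, Polynomial.eval_sub,
              Polynomial.eval_X, Polynomial.eval_C, Polynomial.eval_neg]
            rw [hzsq, ← hab]
            ring
      obtain ⟨P₁, hdeg₁, heq⟩ := main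
      have hyp₁ := transfer m P₁ w (fun θ => by rw [← heq θ]; exact hyp θ)
      obtain ⟨Q₁, hQ₁deg, hQ₁⟩ := IH P₁ hdeg₁ hyp₁
      refine ⟨(X - C w) * Q₁, ?_, fun θ => ?_⟩
      · calc ((X - C w) * Q₁).natDegree ≤ (X - C w).natDegree + Q₁.natDegree :=
            Polynomial.natDegree_mul_le
          _ ≤ m + 1 := by rw [Polynomial.natDegree_X_sub_C]; omega
      · rw [heq θ, hQ₁ θ]
        simp only [Polynomial.eval_mul, Polynomial.eval_sub, Polynomial.eval_X, Polynomial.eval_C]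
        rw [Complex.normSq_mul]
        push_cast
        ring

theorem stmt_5 (d : ℕ) (c : ℤ → ℂ)
    (hpos : ∀ θ : ℝ,
      0 ≤ (∑ j ∈ Finset.Icc (-(d : ℤ)) (d : ℤ), c j * Complex.exp (Complex.I * j * θ)).re ∧
      (∑ j ∈ Finset.Icc (-(d : ℤ)) (d : ℤ), c j * Complex.exp (Complex.I * j * θ)).im = 0) :
    ∃ a : ℕ → ℂ, ∀ θ : ℝ,
      ∑ j ∈ Finset.Icc (-(d : ℤ)) (d : ℤ), c j * Complex.exp (Complex.I * j * θ) =
        ((Complex.normSq (∑ j ∈ Finset.range (d + 1),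
            a j * Complex.exp (Complex.I * j * θ)) : ℝ) : ℂ) := by
  obtain ⟨P, hPdef⟩ : ∃ P : Polynomial ℂ,
      P = ∑ j ∈ Finset.Icc (-(d : ℤ)) (d : ℤ), Polynomial.C (c j) * Polynomial.X ^ (j + d).toNat :=
    ⟨_, rfl⟩
  have hrepr : ∀ θ : ℝ, ∑ j ∈ Finset.Icc (-(d : ℤ)) (d : ℤ), c j * Complex.exp (Complex.I * j * θ)
      = Complex.exp (-(Complex.I * d * θ)) * P.eval (Complex.exp (Complex.I * θ)) := by
    intro θ
    rw [hPdef, Polynomial.eval_finset_sum, Finset.mul_sum]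
    refine Finset.sum_congr rfl fun j hj => ?_
    rw [Finset.mem_Icc] at hj
    simp only [Polynomial.eval_mul, Polynomial.eval_C, Polynomial.eval_pow, Polynomial.eval_X]
    have hjd : (((j + d).toNat : ℕ) : ℂ) = (j : ℂ) + (d : ℂ) := by
      have : ((j + d).toNat : ℤ) = j + d := Int.toNat_of_nonneg (by omega)
      exact_mod_cast congrArg (fun x : ℤ => (x : ℂ)) this
    have hpow : Complex.exp (Complex.I * θ) ^ (j + d).toNat
        = Complex.exp (Complex.I * (((j + d).toNat : ℕ) : ℂ) * θ) := by
      rw [← Complex.exp_nat_mul]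
      ring_nf
    rw [hpow]
    have : Complex.exp (-(Complex.I * d * θ)) *
        (c j * Complex.exp (Complex.I * (((j + d).toNat : ℕ) : ℂ) * θ))
        = c j * (Complex.exp (-(Complex.I * d * θ)) *
          Complex.exp (Complex.I * (((j + d).toNat : ℕ) : ℂ) * θ)) := by ring
    rw [this, ← Complex.exp_add]
    congr 1
    rw [hjd]
    push_cast
    ring
  have hPdeg : P.natDegree ≤ 2 * d := by
    rw [hPdef]
    refine Polynomial.natDegree_sum_le_of_forall_le _ _ (fun j hj => ?_)
    refine (Polynomial.natDegree_C_mul_X_pow_le _ _).trans ?_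
    rw [Finset.mem_Icc] at hj
    omega
  have hyp : ∀ θ : ℝ,
      (Complex.exp (-(Complex.I * d * θ)) * P.eval (Complex.exp (Complex.I * θ))).im = 0 ∧
      0 ≤ (Complex.exp (-(Complex.I * d * θ)) * P.eval (Complex.exp (Complex.I * θ))).re := by
    intro θ
    rw [← hrepr θ]
    exact ⟨(hpos θ).2, (hpos θ).1⟩
  obtain ⟨Q, hQdeg, hQ⟩ := key d P hPdeg hyp
  refine ⟨fun j => Q.coeff j, fun θ => ?_⟩
  rw [hrepr θ, hQ θ]
  have heval : Q.eval (Complex.exp (Complex.I * θ))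
      = ∑ j ∈ Finset.range (d + 1), Q.coeff j * Complex.exp (Complex.I * (j : ℕ) * θ) := by
    rw [Polynomial.eval_eq_sum_range' (lt_of_le_of_lt hQdeg (Nat.lt_succ_self d))]
    refine Finset.sum_congr rfl fun j _ => ?_
    congr 1
    rw [← Complex.exp_nat_mul]
    ring_nf
  rw [heval]
end

section
/- Let f : D → C be analytic on the open unit disk D with Re f(z) ≥ 0 for all z ∈ D. Then the kernel K_f(z, w) = (f(z) + conj(f(w)))/(1 − z·conj(w)) is positive semi-definite on D × D, i.e., for any finitely many points z_1,...,z_N ∈ D and complex scalars c_1,...,c_N, Σ_{i,j} K_f(z_i, z_j) c_i conj(c_j) ≥ 0. -/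
open Complex Metric Set Filter Topology intervalIntegral




private lemma norm_circleMap' (θ : ℝ) : ‖circleMap 0 1 θ‖ = 1 := by
  simp [norm_circleMap_zero]

private lemma circleMap_ne_zero' (θ : ℝ) : circleMap 0 1 θ ≠ 0 := by
  intro h
  have := norm_circleMap' θ
  rw [h] at this; simp at this

private lemma den1_ne {a : ℂ} (ha : ‖a‖ < 1) (θ : ℝ) : circleMap 0 1 θ - a ≠ 0 := by
  intro h
  have h2 : circleMap 0 1 θ = a := by linear_combination h
  rw [← h2] at ha
  rw [norm_circleMap'] at ha; linarith

private lemma den2_ne {b : ℂ} (hb : ‖b‖ < 1) (θ : ℝ) :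
    (1 : ℂ) - (starRingEnd ℂ) b * circleMap 0 1 θ ≠ 0 := by
  intro h
  have h2 : (starRingEnd ℂ) b * circleMap 0 1 θ = 1 := by linear_combination -h
  have := congrArg norm h2
  rw [norm_mul, RCLike.norm_conj, norm_circleMap', mul_one, norm_one] at this
  linarith

private lemma cauchy1 {R : ℝ} (hR : 1 < R) {f : ℂ → ℂ}
    (hf : DifferentiableOn ℂ f (ball 0 R)) {a b : ℂ} (ha : ‖a‖ < 1) (hb : ‖b‖ < 1) :
    (∫ θ in (0:ℝ)..(2*Real.pi), f (circleMap 0 1 θ) * circleMap 0 1 θ /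
      ((circleMap 0 1 θ - a) * (1 - (starRingEnd ℂ) b * circleMap 0 1 θ)))
    = 2 * Real.pi * (f a / (1 - (starRingEnd ℂ) b * a)) := by
  set g : ℂ → ℂ := fun ζ => f ζ / (1 - (starRingEnd ℂ) b * ζ) with hgdef
  set s : Set ℂ := ball (0:ℂ) R ∩ {ζ | (1 : ℂ) - (starRingEnd ℂ) b * ζ ≠ 0} with hsdef
  have hsub : closedBall (0:ℂ) 1 ⊆ s := by
    intro ζ hζ
    have hζ1 : ‖ζ‖ ≤ 1 := by simpa [mem_closedBall, dist_eq_norm] using hζ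
    constructor
    · simp only [mem_ball, dist_eq_norm, sub_zero]; linarith
    · intro h0
      have h2 : (starRingEnd ℂ) b * ζ = 1 := by linear_combination -h0
      have := congrArg norm h2
      rw [norm_mul, RCLike.norm_conj, norm_one] at this
      nlinarith [norm_nonneg ζ, norm_nonneg b]
  have hgd : DifferentiableOn ℂ g s := by
    apply DifferentiableOn.div
    · exact hf.mono inter_subset_left
    · fun_prop
    · exact fun ζ hζ => hζ.2
  have hgc : DiffContOnCl ℂ g (ball (0:ℂ) 1) := by
    apply DifferentiableOn.diffContOnCl
    rw [closure_ball (0:ℂ) one_ne_zero]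
    exact hgd.mono hsub
  have ha' : a ∈ ball (0:ℂ) 1 := by simpa [mem_ball, dist_eq_norm] using ha
  have key := hgc.circleIntegral_sub_inv_smul ha'
  rw [circleIntegral] at key
  simp only [deriv_circleMap, smul_eq_mul] at key
  have h1 : ∀ θ ∈ Set.uIcc (0:ℝ) (2*Real.pi),
      circleMap 0 1 θ * I * ((circleMap 0 1 θ - a)⁻¹ * g (circleMap 0 1 θ))
      = I * (f (circleMap 0 1 θ) * circleMap 0 1 θ /
        ((circleMap 0 1 θ - a) * (1 - (starRingEnd ℂ) b * circleMap 0 1 θ))) := by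
    intro θ _
    simp only [hgdef, div_eq_mul_inv, mul_inv]
    ring
  rw [intervalIntegral.integral_congr h1, intervalIntegral.integral_const_mul] at key
  have h2 : I * (∫ θ in (0:ℝ)..(2*Real.pi), f (circleMap 0 1 θ) * circleMap 0 1 θ /
      ((circleMap 0 1 θ - a) * (1 - (starRingEnd ℂ) b * circleMap 0 1 θ)))
      = I * (2 * Real.pi * (f a / (1 - (starRingEnd ℂ) b * a))) := by
    rw [key]; simp only [hgdef]; ring
  exact mul_left_cancel₀ I_ne_zero h2


private lemma interval_integral_conj {f : ℝ → ℂ} {a b : ℝ} :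
    (∫ x in a..b, (starRingEnd ℂ) (f x)) = (starRingEnd ℂ) (∫ x in a..b, f x) := by
  simp [intervalIntegral, integral_conj]

private lemma cauchy2 {R : ℝ} (hR : 1 < R) {f : ℂ → ℂ}
    (hf : DifferentiableOn ℂ f (ball 0 R)) {a b : ℂ} (ha : ‖a‖ < 1) (hb : ‖b‖ < 1) :
    (∫ θ in (0:ℝ)..(2*Real.pi), (starRingEnd ℂ) (f (circleMap 0 1 θ)) * circleMap 0 1 θ /
      ((circleMap 0 1 θ - a) * (1 - (starRingEnd ℂ) b * circleMap 0 1 θ)))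
    = 2 * Real.pi * ((starRingEnd ℂ) (f b) / (1 - a * (starRingEnd ℂ) b)) := by
  have h := cauchy1 hR hf hb ha
  have hpt : ∀ θ ∈ Set.uIcc (0:ℝ) (2*Real.pi),
      (starRingEnd ℂ) (f (circleMap 0 1 θ)) * circleMap 0 1 θ /
        ((circleMap 0 1 θ - a) * (1 - (starRingEnd ℂ) b * circleMap 0 1 θ))
      = (starRingEnd ℂ) (f (circleMap 0 1 θ) * circleMap 0 1 θ /
        ((circleMap 0 1 θ - b) * (1 - (starRingEnd ℂ) a * circleMap 0 1 θ))) := by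
    intro θ _
    set ζ := circleMap 0 1 θ with hζdef
    have hζ0 : ζ ≠ 0 := circleMap_ne_zero' θ
    have hcζ : (starRingEnd ℂ) ζ = ζ⁻¹ := (Complex.inv_eq_conj (norm_circleMap' θ)).symm
    have d1 : ζ - a ≠ 0 := den1_ne ha θ
    have d2 : (1:ℂ) - (starRingEnd ℂ) b * ζ ≠ 0 := den2_ne hb θ
    have d3 : ζ - b ≠ 0 := den1_ne hb θ
    have d4 : (1:ℂ) - (starRingEnd ℂ) a * ζ ≠ 0 := den2_ne ha θ
    simp only [map_div₀, map_mul, map_sub, map_one, Complex.conj_conj]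
    rw [hcζ]
    have e1 : ζ⁻¹ - (starRingEnd ℂ) b = ζ⁻¹ * (1 - (starRingEnd ℂ) b * ζ) := by
      field_simp
      try ring
    have e2 : (1:ℂ) - a * ζ⁻¹ = ζ⁻¹ * (ζ - a) := by
      field_simp
      try ring
    rw [e1, e2]
    rw [div_eq_div_iff (mul_ne_zero d1 d2) (by
      apply mul_ne_zero <;> exact mul_ne_zero (inv_ne_zero hζ0) (by assumption))]
    field_simp
  rw [intervalIntegral.integral_congr hpt, interval_integral_conj, h]
  simp only [map_mul, map_div₀, map_sub, map_one, Complex.conj_conj, Complex.conj_ofReal,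
    map_ofNat]


private lemma cont_f_circle {R : ℝ} (hR : 1 < R) {f : ℂ → ℂ}
    (hf : DifferentiableOn ℂ f (ball 0 R)) :
    Continuous (fun θ : ℝ => f (circleMap 0 1 θ)) := by
  apply hf.continuousOn.comp_continuous (continuous_circleMap 0 1)
  intro θ
  simp only [mem_ball, dist_eq_norm, sub_zero, norm_circleMap']
  linarith

private lemma cont_den {a b : ℂ} (ha : ‖a‖ < 1) (hb : ‖b‖ < 1) :
    Continuous (fun θ : ℝ => (circleMap 0 1 θ - a) *
      (1 - (starRingEnd ℂ) b * circleMap 0 1 θ)) := by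
  fun_prop

private lemma pair {R : ℝ} (hR : 1 < R) {f : ℂ → ℂ}
    (hf : DifferentiableOn ℂ f (ball 0 R)) {a b : ℂ} (ha : ‖a‖ < 1) (hb : ‖b‖ < 1) :
    (∫ θ in (0:ℝ)..(2*Real.pi), (f (circleMap 0 1 θ) + (starRingEnd ℂ) (f (circleMap 0 1 θ))) /
      ((circleMap 0 1 θ - a) * (starRingEnd ℂ) (circleMap 0 1 θ - b)))
    = 2 * Real.pi * ((f a + (starRingEnd ℂ) (f b)) / (1 - a * (starRingEnd ℂ) b)) := by
  have hpt : ∀ θ ∈ Set.uIcc (0:ℝ) (2*Real.pi),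
      (f (circleMap 0 1 θ) + (starRingEnd ℂ) (f (circleMap 0 1 θ))) /
        ((circleMap 0 1 θ - a) * (starRingEnd ℂ) (circleMap 0 1 θ - b))
      = f (circleMap 0 1 θ) * circleMap 0 1 θ /
          ((circleMap 0 1 θ - a) * (1 - (starRingEnd ℂ) b * circleMap 0 1 θ))
        + (starRingEnd ℂ) (f (circleMap 0 1 θ)) * circleMap 0 1 θ /
          ((circleMap 0 1 θ - a) * (1 - (starRingEnd ℂ) b * circleMap 0 1 θ)) := by
    intro θ _
    set ζ := circleMap 0 1 θ with hζdef
    have hζ0 : ζ ≠ 0 := circleMap_ne_zero' θ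
    have hcζ : (starRingEnd ℂ) ζ = ζ⁻¹ := (Complex.inv_eq_conj (norm_circleMap' θ)).symm
    have d1 : ζ - a ≠ 0 := den1_ne ha θ
    have d2 : (1:ℂ) - (starRingEnd ℂ) b * ζ ≠ 0 := den2_ne hb θ
    have e3 : (starRingEnd ℂ) (ζ - b) = ζ⁻¹ * (1 - (starRingEnd ℂ) b * ζ) := by
      rw [map_sub, hcζ]
      field_simp
      try ring
    rw [e3, ← add_div]
    rw [div_eq_div_iff (by exact mul_ne_zero d1 (mul_ne_zero (inv_ne_zero hζ0) d2))
      (mul_ne_zero d1 d2)]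
    field_simp
  rw [intervalIntegral.integral_congr hpt]
  have i1 : IntervalIntegrable (fun θ : ℝ => f (circleMap 0 1 θ) * circleMap 0 1 θ /
      ((circleMap 0 1 θ - a) * (1 - (starRingEnd ℂ) b * circleMap 0 1 θ)))
      MeasureTheory.volume 0 (2*Real.pi) := by
    apply Continuous.intervalIntegrable
    exact ((cont_f_circle hR hf).mul (continuous_circleMap 0 1)).div (cont_den ha hb)
      (fun θ => mul_ne_zero (den1_ne ha θ) (den2_ne hb θ))
  have i2 : IntervalIntegrable (fun θ : ℝ => (starRingEnd ℂ) (f (circleMap 0 1 θ)) *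
      circleMap 0 1 θ /
      ((circleMap 0 1 θ - a) * (1 - (starRingEnd ℂ) b * circleMap 0 1 θ)))
      MeasureTheory.volume 0 (2*Real.pi) := by
    apply Continuous.intervalIntegrable
    exact ((Complex.continuous_conj.comp (cont_f_circle hR hf)).mul
      (continuous_circleMap 0 1)).div (cont_den ha hb)
      (fun θ => mul_ne_zero (den1_ne ha θ) (den2_ne hb θ))
  rw [intervalIntegral.integral_add i1 i2, cauchy1 hR hf ha hb, cauchy2 hR hf ha hb]
  have hne : (1:ℂ) - a * (starRingEnd ℂ) b ≠ 0 := by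
    intro h
    have h2 : a * (starRingEnd ℂ) b = 1 := by linear_combination -h
    have := congrArg norm h2
    rw [norm_mul, RCLike.norm_conj, norm_one] at this
    nlinarith [norm_nonneg a, norm_nonneg b]
  have hne2 : (1:ℂ) - (starRingEnd ℂ) b * a ≠ 0 := by
    rw [mul_comm]; exact hne
  field_simp


private lemma lemA {R : ℝ} (hR : 1 < R) {f : ℂ → ℂ}
    (hf : DifferentiableOn ℂ f (ball 0 R))
    (hre : ∀ w : ℂ, ‖w‖ = 1 → 0 ≤ (f w).re)
    {N : ℕ} {z : Fin N → ℂ} (hz : ∀ i, ‖z i‖ < 1) (c : Fin N → ℂ) :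
    ∃ t : ℝ, 0 ≤ t ∧ (∑ i, ∑ j, (f (z i) + (starRingEnd ℂ) (f (z j))) /
            (1 - z i * (starRingEnd ℂ) (z j)) * c i * (starRingEnd ℂ) (c j)) = (t : ℂ) := by
  set ζ : ℝ → ℂ := fun θ => circleMap 0 1 θ with hζdef
  set G : Fin N → Fin N → ℝ → ℂ := fun i j θ =>
    (f (ζ θ) + (starRingEnd ℂ) (f (ζ θ))) / ((ζ θ - z i) * (starRingEnd ℂ) (ζ θ - z j))
      * c i * (starRingEnd ℂ) (c j) with hGdef
  have hGcont : ∀ i j, Continuous (G i j) := by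
    intro i j
    apply Continuous.mul
    apply Continuous.mul
    · apply Continuous.div
      · exact (cont_f_circle hR hf).add (Complex.continuous_conj.comp (cont_f_circle hR hf))
      · exact ((continuous_circleMap 0 1).sub continuous_const).mul
          (Complex.continuous_conj.comp ((continuous_circleMap 0 1).sub continuous_const))
      · intro θ
        exact mul_ne_zero (den1_ne (hz i) θ)
          ((map_ne_zero (starRingEnd ℂ)).mpr (den1_ne (hz j) θ))
    · exact continuous_const
    · exact continuous_const
  have hGint : ∀ i j, (∫ θ in (0:ℝ)..(2*Real.pi), G i j θ)
      = 2 * Real.pi * ((f (z i) + (starRingEnd ℂ) (f (z j))) /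
          (1 - z i * (starRingEnd ℂ) (z j))) * c i * (starRingEnd ℂ) (c j) := by
    intro i j
    have : G i j = fun θ => ((f (ζ θ) + (starRingEnd ℂ) (f (ζ θ))) /
        ((ζ θ - z i) * (starRingEnd ℂ) (ζ θ - z j))) * (c i * (starRingEnd ℂ) (c j)) := by
      funext θ; simp only [hGdef]; ring
    rw [this, intervalIntegral.integral_mul_const, pair hR hf (hz i) (hz j)]
    ring
  -- T and ρ
  set T : ℝ → ℂ := fun θ => ∑ i, c i / (ζ θ - z i) with hTdef
  set ρ : ℝ → ℝ := fun θ => 2 * (f (ζ θ)).re * Complex.normSq (T θ) with hρdef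
  have hpt : ∀ θ : ℝ, (∑ i, ∑ j, G i j θ) = ((ρ θ : ℝ) : ℂ) := by
    intro θ
    have step1 : ∀ i j, G i j θ = (f (ζ θ) + (starRingEnd ℂ) (f (ζ θ))) *
        ((c i / (ζ θ - z i)) * (starRingEnd ℂ) (c j / (ζ θ - z j))) := by
      intro i j
      simp only [hGdef, map_div₀, map_mul, map_inv₀, div_eq_mul_inv, mul_inv]
      ring
    calc (∑ i, ∑ j, G i j θ)
        = (f (ζ θ) + (starRingEnd ℂ) (f (ζ θ))) * (T θ * (starRingEnd ℂ) (T θ)) := by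
          simp only [step1, hTdef, map_sum]
          rw [Finset.sum_mul_sum]
          simp only [Finset.mul_sum]
      _ = ((ρ θ : ℝ) : ℂ) := by
          rw [Complex.add_conj, Complex.mul_conj, hρdef]
          push_cast
          ring
  have hbig : (∫ θ in (0:ℝ)..(2*Real.pi), ((ρ θ : ℝ) : ℂ))
      = ∑ i, ∑ j, (∫ θ in (0:ℝ)..(2*Real.pi), G i j θ) := by
    have e1 : (∫ θ in (0:ℝ)..(2*Real.pi), ((ρ θ : ℝ) : ℂ))
        = ∫ θ in (0:ℝ)..(2*Real.pi), ∑ i, ∑ j, G i j θ :=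
      intervalIntegral.integral_congr (fun θ _ => (hpt θ).symm)
    rw [e1, intervalIntegral.integral_finset_sum (fun i _ =>
      (continuous_finset_sum _ fun j _ => hGcont i j).intervalIntegrable _ _)]
    exact Finset.sum_congr rfl fun i _ =>
      intervalIntegral.integral_finset_sum (fun j _ => (hGcont i j).intervalIntegrable _ _)
  have hρnn : 0 ≤ ∫ θ in (0:ℝ)..(2*Real.pi), ρ θ := by
    apply intervalIntegral.integral_nonneg (by positivity)
    intro θ _
    have h1 : 0 ≤ (f (ζ θ)).re := hre (ζ θ) (norm_circleMap' θ)
    have h2 : 0 ≤ Complex.normSq (T θ) := Complex.normSq_nonneg _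
    positivity
  refine ⟨(∫ θ in (0:ℝ)..(2*Real.pi), ρ θ) / (2 * Real.pi), by positivity, ?_⟩
  have h2π : (2 * Real.pi : ℂ) ≠ 0 := by
    simp only [ne_eq, mul_eq_zero, not_or]
    constructor
    · norm_num
    · exact_mod_cast Real.pi_ne_zero
  have key : (2 * Real.pi : ℂ) * (∑ i, ∑ j, (f (z i) + (starRingEnd ℂ) (f (z j))) /
      (1 - z i * (starRingEnd ℂ) (z j)) * c i * (starRingEnd ℂ) (c j))
      = ((∫ θ in (0:ℝ)..(2*Real.pi), ρ θ : ℝ) : ℂ) := by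
    rw [← intervalIntegral.integral_ofReal, hbig]
    simp only [Finset.mul_sum]
    refine Finset.sum_congr rfl fun i _ => Finset.sum_congr rfl fun j _ => ?_
    rw [hGint i j]
    ring
  rw [show (((∫ θ in (0:ℝ)..(2*Real.pi), ρ θ) / (2*Real.pi) : ℝ) : ℂ)
    = ((∫ θ in (0:ℝ)..(2*Real.pi), ρ θ : ℝ) : ℂ) / (2*Real.pi : ℂ) by push_cast; ring]
  rw [eq_div_iff h2π]
  linear_combination key


theorem stmt_6 (f : ℂ → ℂ) (hf : DifferentiableOn ℂ f (Metric.ball 0 1))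
    (hre : ∀ z ∈ Metric.ball (0 : ℂ) 1, 0 ≤ (f z).re) :
    ∀ (N : ℕ) (z : Fin N → ℂ), (∀ i, z i ∈ Metric.ball (0 : ℂ) 1) → ∀ c : Fin N → ℂ,
      0 ≤ (∑ i, ∑ j, (f (z i) + (starRingEnd ℂ) (f (z j))) /
            (1 - z i * (starRingEnd ℂ) (z j)) * c i * (starRingEnd ℂ) (c j)).re ∧
      (∑ i, ∑ j, (f (z i) + (starRingEnd ℂ) (f (z j))) /
            (1 - z i * (starRingEnd ℂ) (z j)) * c i * (starRingEnd ℂ) (c j)).im = 0 := by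
  intro N z hzmem c
  have hz : ∀ i, ‖z i‖ < 1 := fun i => by
    simpa [mem_ball, dist_eq_norm] using hzmem i
  set F : ℝ → ℂ := fun r => ∑ i, ∑ j, (f ((r : ℂ) * z i) + (starRingEnd ℂ) (f ((r : ℂ) * z j))) /
      (1 - z i * (starRingEnd ℂ) (z j)) * c i * (starRingEnd ℂ) (c j) with hFdef
  -- each F r for r ∈ Ioo 0 1 is a nonneg real
  have hFr : ∀ r ∈ Ioo (0:ℝ) 1, ∃ t : ℝ, 0 ≤ t ∧ F r = (t : ℂ) := by
    intro r hr
    obtain ⟨hr0, hr1⟩ := hr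
    have hinv : 1 < r⁻¹ := (one_lt_inv₀ hr0).mpr hr1
    have hfr : DifferentiableOn ℂ (fun w => f ((r : ℂ) * w)) (ball 0 r⁻¹) := by
      apply DifferentiableOn.comp hf
      · exact (differentiable_id.const_mul _).differentiableOn
      · intro w hw
        simp only [mem_ball, dist_eq_norm, sub_zero] at hw ⊢
        rw [norm_mul, Complex.norm_real, Real.norm_eq_abs, abs_of_pos hr0]
        calc r * ‖w‖ < r * r⁻¹ := by exact mul_lt_mul_of_pos_left hw hr0
          _ = 1 := mul_inv_cancel₀ (ne_of_gt hr0)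
    have hrer : ∀ w : ℂ, ‖w‖ = 1 → 0 ≤ ((fun w => f ((r : ℂ) * w)) w).re := by
      intro w hw
      apply hre
      simp only [mem_ball, dist_eq_norm, sub_zero]
      rw [norm_mul, Complex.norm_real, Real.norm_eq_abs, abs_of_pos hr0, hw, mul_one]
      exact hr1
    exact lemA hinv hfr hrer hz c
  -- Tendsto F (𝓝[Ioo 0 1] 1) (𝓝 S)
  haveI : (𝓝[Ioo (0:ℝ) 1] 1).NeBot := right_nhdsWithin_Ioo_neBot (by norm_num)
  have hti : ∀ i, Tendsto (fun r : ℝ => f ((r : ℂ) * z i)) (𝓝[Ioo (0:ℝ) 1] 1)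
      (𝓝 (f (z i))) := by
    intro i
    have hcw : ContinuousWithinAt f (ball 0 1) (z i) := hf.continuousOn (z i) (hzmem i)
    apply hcw.tendsto.comp
    rw [tendsto_nhdsWithin_iff]
    constructor
    · have : Tendsto (fun r : ℝ => (r : ℂ) * z i) (𝓝 1) (𝓝 ((1 : ℂ) * z i)) :=
        (Complex.continuous_ofReal.mul continuous_const).tendsto' 1 _ rfl |>.mono_left le_rfl
      rw [one_mul] at this
      exact this.mono_left nhdsWithin_le_nhds
    · filter_upwards [eventually_mem_nhdsWithin] with r hr
      simp only [mem_ball, dist_eq_norm, sub_zero]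
      rw [norm_mul, Complex.norm_real, Real.norm_eq_abs, abs_of_pos hr.1]
      have := hz i
      nlinarith [norm_nonneg (z i), hr.2]
  have hF : Tendsto F (𝓝[Ioo (0:ℝ) 1] 1) (𝓝 (∑ i, ∑ j,
      (f (z i) + (starRingEnd ℂ) (f (z j))) /
        (1 - z i * (starRingEnd ℂ) (z j)) * c i * (starRingEnd ℂ) (c j))) := by
    apply tendsto_finset_sum
    intro i _
    apply tendsto_finset_sum
    intro j _
    exact ((((hti i).add ((Complex.continuous_conj.tendsto _).comp (hti j))).div_const
      _).mul_const _).mul_const _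
  constructor
  · apply ge_of_tendsto ((Complex.continuous_re.tendsto _).comp hF)
    filter_upwards [eventually_mem_nhdsWithin] with r hr
    obtain ⟨t, ht0, hFt⟩ := hFr r hr
    simp only [Function.comp_apply, hFt, Complex.ofReal_re]
    exact ht0
  · have him : Tendsto (fun r => (F r).im) (𝓝[Ioo (0:ℝ) 1] 1) (𝓝 0) := by
      apply Tendsto.congr' ?_ tendsto_const_nhds
      filter_upwards [eventually_mem_nhdsWithin] with r hr
      obtain ⟨t, _, hFt⟩ := hFr r hr
      simp [hFt]
    exact tendsto_nhds_unique ((Complex.continuous_im.tendsto _).comp hF) him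
end

section
/- (Putinar Positivstellensatz) Let F = {f_1,...,f_r} ⊂ R[x_1,...,x_g] be such that the quadratic module QM(F) = Σ² + f_1 Σ² + ... + f_r Σ² is archimedean. If p ∈ R[x_1,...,x_g] satisfies p(x) > 0 for all x in D(F) = {x : f_i(x) ≥ 0 for all i}, then p ∈ QM(F), i.e., p = s_0 + s_1 f_1 + ... + s_r f_r with each s_i a sum of squares of polynomials. -/
/-- Membership in the quadratic module generated by `f 0, …, f (r-1)`:
`p = s₀ + ∑ i, f i * s i` with all `sᵢ` sums of squares. -/
def InQM {g r : ℕ} (f : Fin r → MvPolynomial (Fin g) ℝ) (p : MvPolynomial (Fin g) ℝ) : Prop :=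
  ∃ (s₀ : MvPolynomial (Fin g) ℝ) (s : Fin r → MvPolynomial (Fin g) ℝ),
    IsSumSq s₀ ∧ (∀ i, IsSumSq (s i)) ∧ p = s₀ + ∑ i, f i * s i

open MvPolynomial

open MvPolynomial

abbrev A (g : ℕ) := MvPolynomial (Fin g) ℝ

/-- Quadratic module predicate. -/
structure IsQM {g : ℕ} (Q : Set (A g)) : Prop where
  add_mem : ∀ {a b}, a ∈ Q → b ∈ Q → a + b ∈ Q
  sq_mul_mem : ∀ (a : A g) {q}, q ∈ Q → a * a * q ∈ Q
  sq_mem : ∀ a : A g, a * a ∈ Q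

namespace IsQM

variable {g : ℕ} {Q : Set (A g)}

theorem zero_mem (hQ : IsQM Q) : (0 : A g) ∈ Q := by
  have := hQ.sq_mem 0; simpa using this

theorem sumSq_mem (hQ : IsQM Q) {s : A g} (hs : IsSumSq s) : s ∈ Q := by
  induction hs with
  | zero => exact hQ.zero_mem
  | @sq_add a S _ ih => exact hQ.add_mem (hQ.sq_mem a) ih

theorem sumSq_mul_mem (hQ : IsQM Q) {s q : A g} (hs : IsSumSq s) (hq : q ∈ Q) : s * q ∈ Q := by
  induction hs with
  | zero => simpa using hQ.zero_mem
  | @sq_add a S _ ih =>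
      have h : (a * a + S) * q = a * a * q + S * q := by ring
      rw [h]; exact hQ.add_mem (hQ.sq_mul_mem a hq) ih

theorem smul_mem (hQ : IsQM Q) {c : ℝ} (hc : 0 ≤ c) {q : A g} (hq : q ∈ Q) : C c * q ∈ Q := by
  have h : (C c : A g) = C (Real.sqrt c) * C (Real.sqrt c) := by
    rw [← C_mul, Real.mul_self_sqrt hc]
  rw [h]; exact hQ.sq_mul_mem _ hq

theorem const_mem (hQ : IsQM Q) {c : ℝ} (hc : 0 ≤ c) : (C c : A g) ∈ Q := by
  have := hQ.smul_mem hc hQ.zero_mem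
  have h1 : (C c : A g) = C c * (0 * 0) + C c := by ring
  -- simpler: C c = C √c * C √c
  have h : (C c : A g) = C (Real.sqrt c) * C (Real.sqrt c) := by
    rw [← C_mul, Real.mul_self_sqrt hc]
  rw [h]; exact hQ.sq_mem _

/-- If `-1 ∈ Q` then everything is. -/
theorem all_of_neg_one (hQ : IsQM Q) (h : (-1 : A g) ∈ Q) (a : A g) : a ∈ Q := by
  have h2 : ((a+1)*(a+1) + (a-1)*(a-1)*(-1) : A g) ∈ Q :=
    hQ.add_mem (hQ.sq_mem _) (hQ.sq_mul_mem _ h)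
  have h3 : (C (4⁻¹:ℝ) : A g) * ((a+1)*(a+1) + (a-1)*(a-1)*(-1)) ∈ Q :=
    hQ.smul_mem (by norm_num) h2
  have h4 : (C (4:ℝ) : A g) = 4 := map_ofNat _ 4
  have h5 : (C (4⁻¹:ℝ) : A g) * 4 = 1 := by rw [← h4, ← C_mul]; norm_num
  have h6 : (C (4⁻¹:ℝ) : A g) * ((a+1)*(a+1) + (a-1)*(a-1)*(-1)) = a := by
    linear_combination a * h5
  rwa [h6] at h3

theorem neg_const_not_mem (hQ : IsQM Q) (hproper : (-1 : A g) ∉ Q) {c : ℝ} (hc : c < 0)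
    (h : (C c : A g) ∈ Q) : False := by
  have h2 : (C (1/(-c)) : A g) * C c ∈ Q := hQ.smul_mem (le_of_lt (by rw [one_div]; exact inv_pos.mpr (neg_pos.mpr hc))) h
  have h3 : (C (1/(-c)) : A g) * C c = -1 := by
    rw [← C_mul]
    have h4 : 1/(-c) * c = -1 := by
      field_simp
      rw [div_self hc.ne]
    rw [h4]; simp
  exact hproper (h3 ▸ h2)

end IsQM
theorem IsSumSq.sq_mul {g : ℕ} (a : A g) {s : A g} (hs : IsSumSq s) : IsSumSq (a * a * s) := by
  induction hs with
  | zero => simpa using IsSumSq.zero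
  | @sq_add b S _ ih =>
      have h : a * a * (b * b + S) = (a*b) * (a*b) + a * a * S := by ring
      rw [h]; exact IsSumSq.sq_add _ ih

theorem isSumSq_one {g : ℕ} : IsSumSq (1 : A g) := by
  have := IsSumSq.sq_add (1 : A g) IsSumSq.zero
  simpa using this

variable {g r : ℕ} {f : Fin r → MvPolynomial (Fin g) ℝ}

theorem inQM_of_isSumSq {s : A g} (hs : IsSumSq s) : InQM f s :=
  ⟨s, 0, hs, fun _ => IsSumSq.zero, by simp⟩

theorem inQM_f (i : Fin r) : InQM f (f i) := by
  refine ⟨0, fun j => if j = i then 1 else 0, IsSumSq.zero, ?_, ?_⟩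
  · intro j; by_cases h : j = i <;> simp [h, isSumSq_one, IsSumSq.zero]
  · simp [mul_ite, mul_one, mul_zero, Finset.sum_ite_eq']

theorem isQM_inQM : IsQM {q : A g | InQM f q} where
  add_mem := by
    rintro a b ⟨s₀, s, hs₀, hs, rfl⟩ ⟨t₀, t, ht₀, ht, rfl⟩
    refine ⟨s₀ + t₀, fun i => s i + t i, hs₀.add ht₀, fun i => (hs i).add (ht i), ?_⟩
    simp only []
    rw [show (s₀ + ∑ i, f i * s i + (t₀ + ∑ i, f i * t i))
        = s₀ + t₀ + ∑ i, (f i * s i + f i * t i) by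
      rw [Finset.sum_add_distrib]; ring]
    congr 1
    exact Finset.sum_congr rfl fun i _ => (mul_add _ _ _).symm
  sq_mul_mem := by
    rintro a q ⟨s₀, s, hs₀, hs, rfl⟩
    refine ⟨a * a * s₀, fun i => a * a * s i, hs₀.sq_mul a, fun i => (hs i).sq_mul a, ?_⟩
    simp only []
    rw [mul_add, Finset.mul_sum]
    congr 1
    exact Finset.sum_congr rfl fun i _ => by ring
  sq_mem := fun a => inQM_of_isSumSq (by simpa using IsSumSq.sq_add a 0 IsSumSq.zero)
theorem isSumSq_sum_sq {g : ℕ} {ι : Type*} (s : Finset ι) (h : ι → A g) :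
    IsSumSq (∑ j ∈ s, h j ^ 2) := by
  have := IsSumSq.sum_mul_self s h
  simpa [sq] using this

namespace IsQM

variable {g r : ℕ} {f : Fin r → MvPolynomial (Fin g) ℝ} {Q : Set (A g)}

theorem two_smul_eq (x : A g) : (C (2⁻¹:ℝ) : A g) * 2 = 1 := by
  rw [← map_ofNat (C : ℝ →+* A g) 2, ← C_mul]; norm_num

theorem bound_sq (hQ : IsQM Q) (hsub : {q : A g | InQM f q} ⊆ Q)
    (harch : ∃ c : ℝ, 0 < c ∧ InQM f (C c - ∑ i, X i ^ 2)) :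
    ∀ a : A g, ∃ N : ℝ, 0 < N ∧ C N - a * a ∈ Q := by
  obtain ⟨c, hc, hcQM⟩ := harch
  have hX : ∀ i : Fin g, C c - X i * X i ∈ Q := by
    intro i
    have h1 : (C c - ∑ j, X j ^ 2 : A g) ∈ Q := hsub hcQM
    have h2 : (∑ j ∈ Finset.univ.erase i, (X j:A g) ^ 2) ∈ Q :=
      hQ.sumSq_mem (isSumSq_sum_sq _ _)
    have h3 : (C c - ∑ j, X j ^ 2 : A g) + ∑ j ∈ Finset.univ.erase i, (X j:A g) ^ 2
        = C c - X i * X i := by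
      rw [← Finset.add_sum_erase _ _ (Finset.mem_univ i)]; ring
    rw [← h3]; exact hQ.add_mem h1 h2
  intro a
  induction a using MvPolynomial.induction_on with
  | C r =>
      refine ⟨r * r + 1, by nlinarith [mul_self_nonneg r], ?_⟩
      have : (C (r*r+1) - C r * C r : A g) = C 1 := by
        rw [← C_mul, ← C_sub]; norm_num
      rw [this]; exact hQ.const_mem zero_le_one
  | add p q hp hq =>
      obtain ⟨Np, hNp, hp⟩ := hp
      obtain ⟨Nq, hNq, hq⟩ := hq
      refine ⟨2*Np + 2*Nq, by positivity, ?_⟩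
      have h3 : (C (2*Np + 2*Nq) - (p+q)*(p+q) : A g)
          = ((C Np - p*p) + (C Nq - q*q)) + ((C Np - p*p) + (C Nq - q*q)) + (p-q)*(p-q) := by
        rw [show (C (2*Np + 2*Nq) : A g) = C Np + C Nq + (C Np + C Nq) by
          simp only [← C_add]; congr 1; ring]
        ring
      rw [h3]
      exact hQ.add_mem (hQ.add_mem (hQ.add_mem hp hq) (hQ.add_mem hp hq)) (hQ.sq_mem _)
  | mul_X p i hp =>
      obtain ⟨Np, hNp, hp⟩ := hp
      refine ⟨Np * c, by positivity, ?_⟩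
      have h3 : (C (Np * c) - (p * X i)*(p * X i) : A g)
          = p * p * (C c - X i * X i) + C c * (C Np - p * p) := by
        rw [C_mul]; ring
      rw [h3]
      exact hQ.add_mem (hQ.sq_mul_mem _ (hX i)) (hQ.smul_mem hc.le hp)

theorem bound (hQ : IsQM Q) (hsub : {q : A g | InQM f q} ⊆ Q)
    (harch : ∃ c : ℝ, 0 < c ∧ InQM f (C c - ∑ i, X i ^ 2)) :
    ∀ a : A g, ∃ N : ℝ, 0 < N ∧ C N - a ∈ Q ∧ C N + a ∈ Q := by
  intro a
  obtain ⟨N, hN, hsq⟩ := hQ.bound_sq hsub harch a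
  refine ⟨(N+1)/2, by positivity, ?_, ?_⟩
  · have h1 : ((1-a)*(1-a) + (C N - a*a) : A g) ∈ Q := hQ.add_mem (hQ.sq_mem _) hsq
    have h2 : (C (2⁻¹:ℝ) : A g) * ((1-a)*(1-a) + (C N - a*a)) ∈ Q :=
      hQ.smul_mem (by norm_num) h1
    have h3 : (C (2⁻¹:ℝ) : A g) * ((1-a)*(1-a) + (C N - a*a)) = C ((N+1)/2) - a := by
      have h5 := two_smul_eq (g := g) a
      rw [show ((N+1)/2 : ℝ) = (N+1) * 2⁻¹ by ring, C_mul, C_add, C_1]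
      linear_combination (-a) * h5
    rwa [h3] at h2
  · have h1 : ((1+a)*(1+a) + (C N - a*a) : A g) ∈ Q := hQ.add_mem (hQ.sq_mem _) hsq
    have h2 : (C (2⁻¹:ℝ) : A g) * ((1+a)*(1+a) + (C N - a*a)) ∈ Q :=
      hQ.smul_mem (by norm_num) h1
    have h3 : (C (2⁻¹:ℝ) : A g) * ((1+a)*(1+a) + (C N - a*a)) = C ((N+1)/2) + a := by
      have h5 := two_smul_eq (g := g) a
      rw [show ((N+1)/2 : ℝ) = (N+1) * 2⁻¹ by ring, C_mul, C_add, C_1]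
      linear_combination a * h5
    rwa [h3] at h2

end IsQM
theorem isSumSq_mul_self {g : ℕ} (a : A g) : IsSumSq (a * a) := by
  simpa using IsSumSq.sq_add a 0 IsSumSq.zero

theorem IsSumSq.const_mul {g : ℕ} {r : ℝ} (hr : 0 ≤ r) {s : A g} (hs : IsSumSq s) :
    IsSumSq ((C r : A g) * s) := by
  have h : (C r : A g) = C (Real.sqrt r) * C (Real.sqrt r) := by
    rw [← C_mul, Real.mul_self_sqrt hr]
  rw [h]; exact hs.sq_mul _

namespace IsQM

variable {g r : ℕ} {f : Fin r → MvPolynomial (Fin g) ℝ} {Q : Set (A g)}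

theorem descent (hQ : IsQM Q) {y : A g} {B : ℝ} (hB : 0 < B) (hy : y ∈ Q)
    (hBy : C B - y ∈ Q) (hBy' : C B + y ∈ Q) :
    ∀ K : ℕ, ∀ x : A g, ∀ c : ℝ, 0 < c → x ∈ Q → IsSumSq (C c - x) →
      x * y + C (2*c*B/4^K) ∈ Q := by
  intro K
  induction K with
  | zero =>
      intro x c hc hx hσ
      have key : x * y + C (2*c*B/4^(0:ℕ)) =
          C c * (y + C B) + (C c - x) * (C B - y) + C B * x := by
        rw [show (C (2*c*B/4^(0:ℕ)) : A g) = C c * C B + C c * C B by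
          rw [← C_mul, ← C_add]; congr 1; norm_num; ring]
        ring
      rw [key]
      exact hQ.add_mem (hQ.add_mem (hQ.smul_mem hc.le (hQ.add_mem hy (hQ.const_mem hB.le)))
        (hQ.sumSq_mul_mem hσ hBy)) (hQ.smul_mem hB.le hx)
  | succ K ih =>
      intro x c hc hx hσ
      have hx' : (C c - x) * x ∈ Q := hQ.sumSq_mul_mem hσ hx
      have hσ' : IsSumSq (C (c^2/4) - (C c - x) * x) := by
        have hc1 : (C (c/2) : A g) * C (c/2) = C (c^2/4) := by rw [← C_mul]; congr 1; ring
        have hc2 : (C (c/2) : A g) + C (c/2) = C c := by rw [← C_add]; congr 1; ring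
        rw [show (C (c^2/4) - (C c - x) * x : A g)
            = (x - C (c/2)) * (x - C (c/2)) by linear_combination -hc1 + x * hc2]
        exact isSumSq_mul_self _
      have hIH := ih ((C c - x) * x) (c^2/4) (by positivity) hx' hσ'
      have h1 : (C (c⁻¹:ℝ) : A g) * C c = 1 := by
        rw [← C_mul, inv_mul_cancel₀ hc.ne']; exact C_1
      have h2 : (C (c⁻¹:ℝ) : A g) * C (2*(c^2/4)*B/4^K) = C (2*c*B/4^(K+1)) := by
        rw [← C_mul]; congr 1; field_simp; ring
      have key : x * y + C (2*c*B/4^(K+1)) =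
          C (c⁻¹:ℝ) * (x * x * y + ((C c - x) * x * y + C (2*(c^2/4)*B/4^K))) := by
        linear_combination (-(x * y)) * h1 - h2
      rw [key]
      exact hQ.smul_mem (by positivity) (hQ.add_mem (hQ.sq_mul_mem x hy) hIH)

/-- Lemma L: if `p * s = 1 + q` with `s` a sum of squares and `q ∈ Q`,
and the setup is archimedean, then `p ∈ Q`. -/
theorem mem_of_mul_sumSq (hQ : IsQM Q) (hsub : {q : A g | InQM f q} ⊆ Q)
    (harch : ∃ c : ℝ, 0 < c ∧ InQM f (C c - ∑ i, X i ^ 2))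
    {p s q : A g} (hs : IsSumSq s) (hq : q ∈ Q) (heq : p * s = 1 + q) :
    p ∈ Q := by
  obtain ⟨N, hN, hNs, _⟩ := hQ.bound hsub harch s
  obtain ⟨Bp, hBp, hBp1, hBp2⟩ := hQ.bound hsub harch p
  -- the improvement step
  have step : ∀ lam : ℝ, 0 ≤ lam → p + C lam ∈ Q → p + C (lam - 1/(2*N)) ∈ Q := by
    intro lam hlam hmem
    set B : ℝ := Bp + lam + 1 with hBdef
    have hBpos : 0 < B := by positivity
    have hyB1 : C B - (p + C lam) ∈ Q := by
      have : (C B - (p + C lam) : A g) = (C Bp - p) + C 1 := by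
        rw [hBdef, C_add, C_add, C_1]; ring
      rw [this]; exact hQ.add_mem hBp1 (hQ.const_mem zero_le_one)
    have hyB2 : C B + (p + C lam) ∈ Q := by
      have : (C B + (p + C lam) : A g) = (C Bp + p) + C (2*lam + 1) := by
        rw [hBdef, C_add, C_add, show (C (2*lam+1) : A g) = C lam + C lam + C 1 by
          rw [← C_add, ← C_add]; congr 1; ring]
        ring
      rw [this]
      exact hQ.add_mem hBp2 (hQ.const_mem (by linarith))
    set x : A g := C (2/N) * (C N - s) with hxdef
    have hxQ : x ∈ Q := hQ.smul_mem (by positivity) hNs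
    have hσ : IsSumSq (C (2:ℝ) - x) := by
      have : (C (2:ℝ) - x : A g) = C (2/N) * s := by
        rw [hxdef, mul_sub, ← C_mul]
        rw [show 2/N*N = (2:ℝ) by field_simp]
        ring
      rw [this]; exact hs.const_mul (by positivity)
    -- pick K with 2*2*B/4^K ≤ 1/N
    obtain ⟨K, hK⟩ := pow_unbounded_of_one_lt (2*2*B*N) (by norm_num : (1:ℝ) < 4)
    have h4K : (0:ℝ) < 4^K := by positivity
    have he : 2*2*B/4^K ≤ 1/N := by
      rw [div_le_div_iff₀ h4K hN]
      nlinarith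
    have hdes := hQ.descent hBpos hmem hyB1 hyB2 K x 2 (by norm_num) hxQ hσ
    -- scale by N/2
    have hsc : C (N/2) * (x * (p + C lam) + C (2*2*B/4^K)) ∈ Q :=
      hQ.smul_mem (by positivity) hdes
    have hNx : (C (N/2) : A g) * x = C N - s := by
      rw [hxdef, ← mul_assoc, ← C_mul, show N/2*(2/N) = (1:ℝ) by field_simp, C_1, one_mul]
    set e : ℝ := 2*2*B/4^K with hedef
    have hepos : 0 < e := by positivity
    have hsplit : (C (lam - 1/N + e/2) : A g) = C lam - C (1/N) + C (e/2) := by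
      simp only [map_sub, map_add]
    have hc1 : (C N : A g) * C (1/N) = 1 := by
      rw [← C_mul, mul_one_div, div_self hN.ne', C_1]
    have hc2 : (C (N/2) : A g) * C e = C N * C (e/2) := by
      rw [← C_mul, ← C_mul]; congr 1; ring
    have hmem2 : C N * (p + C (lam - 1/N + e/2)) ∈ Q := by
      have h7 : C N * (p + C (lam - 1/N + e/2))
          = C (N/2) * (x * (p + C lam) + C e) + q + C lam * s := by
        linear_combination (C N : A g) * hsplit - (p + C lam) * hNx - hc2 - hc1 + heq
      rw [h7]
      exact hQ.add_mem (hQ.add_mem hsc hq) (hQ.smul_mem hlam (hQ.sumSq_mem hs))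
    have hmem3 : p + C (lam - 1/N + e/2) ∈ Q := by
      have := hQ.smul_mem (le_of_lt (inv_pos.mpr hN)) hmem2
      rwa [← mul_assoc, ← C_mul, inv_mul_cancel₀ hN.ne', C_1, one_mul] at this
    have : p + C (lam - 1/(2*N)) = (p + C (lam - 1/N + e/2)) + C (1/(2*N) - e/2) := by
      rw [add_assoc, ← C_add]; congr 2; ring
    rw [this]
    refine hQ.add_mem hmem3 (hQ.const_mem ?_)
    have h2N : 1/N - e ≥ 0 := by linarith [he]
    have : 1/(2*N) - e/2 = (1/N - e)/2 := by ring
    linarith [div_nonneg h2N (by norm_num : (0:ℝ) ≤ 2)]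
  -- iterate
  have iter : ∀ k : ℕ, p ∈ Q ∨ p + C (Bp - k * (1/(2*N))) ∈ Q := by
    intro k
    induction k with
    | zero => right; simpa [add_comm] using hBp2
    | succ k ih =>
        rcases ih with h | h
        · left; exact h
        · rcases le_or_gt 0 (Bp - k * (1/(2*N))) with hge | hlt
          · right
            have := step _ hge h
            rwa [show Bp - k * (1/(2*N)) - 1/(2*N) = Bp - (k+1 : ℕ) * (1/(2*N)) by
              push_cast; ring] at this
          · left
            have heq2 : p = (p + C (Bp - k * (1/(2*N)))) + C (-(Bp - k * (1/(2*N)))) := by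
              rw [add_assoc, ← C_add]; simp
            rw [heq2]
            exact hQ.add_mem h (hQ.const_mem (by linarith))
  obtain ⟨k, hk⟩ := exists_nat_gt (2*N*Bp)
  rcases iter k with h | h
  · exact h
  · have hneg : Bp - k * (1/(2*N)) < 0 := by
      rw [sub_neg]
      rw [show (k:ℝ) * (1/(2*N)) = k/(2*N) by ring, lt_div_iff₀ (by positivity)]
      linarith
    have heq2 : p = (p + C (Bp - k * (1/(2*N)))) + C (-(Bp - k * (1/(2*N)))) := by
      rw [add_assoc, ← C_add]; simp
    rw [heq2]
    exact hQ.add_mem h (hQ.const_mem (by linarith))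

end IsQM
namespace IsQM

variable {g r : ℕ} {f : Fin r → MvPolynomial (Fin g) ℝ}

/-- The quadratic module generated by a q.m. `Q` and an element `a`. -/
def ext (Q : Set (A g)) (a : A g) : Set (A g) :=
  {z | ∃ q ∈ Q, ∃ s : A g, IsSumSq s ∧ z = q + a * s}

theorem isQM_ext {Q : Set (A g)} (hQ : IsQM Q) (a : A g) : IsQM (ext Q a) where
  add_mem := by
    rintro _ _ ⟨q1, hq1, s1, hs1, rfl⟩ ⟨q2, hq2, s2, hs2, rfl⟩
    exact ⟨q1 + q2, hQ.add_mem hq1 hq2, s1 + s2, hs1.add hs2, by ring⟩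
  sq_mul_mem := by
    rintro b _ ⟨q1, hq1, s1, hs1, rfl⟩
    exact ⟨b * b * q1, hQ.sq_mul_mem b hq1, b * b * s1, hs1.sq_mul b, by ring⟩
  sq_mem := fun b => ⟨b * b, hQ.sq_mem b, 0, IsSumSq.zero, by ring⟩

theorem subset_ext (Q : Set (A g)) (a : A g) : Q ⊆ ext Q a :=
  fun q hq => ⟨q, hq, 0, IsSumSq.zero, by ring⟩

theorem mem_ext (Q : Set (A g)) (hQ : IsQM Q) (a : A g) : a ∈ ext Q a :=
  ⟨0, hQ.zero_mem, 1, isSumSq_one, by ring⟩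

/-- Existence of a maximal proper quadratic module containing a given proper one. -/
theorem exists_maximal {M : Set (A g)} (hM : IsQM M) (hproper : (-1 : A g) ∉ M) :
    ∃ Q : Set (A g), M ⊆ Q ∧ IsQM Q ∧ (-1 : A g) ∉ Q ∧
      ∀ Q' : Set (A g), IsQM Q' → (-1 : A g) ∉ Q' → Q ⊆ Q' → Q' ⊆ Q := by
  set S : Set (Set (A g)) := {Q | IsQM Q ∧ M ⊆ Q ∧ (-1 : A g) ∉ Q} with hS
  have hzorn := zorn_subset_nonempty S ?_ M ⟨hM, subset_rfl, hproper⟩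
  · obtain ⟨Q, hMQ, hQS, hmax⟩ := hzorn
    obtain ⟨hQ, hMQ', hQproper⟩ := hQS
    refine ⟨Q, hMQ, hQ, hQproper, ?_⟩
    intro Q' hQ' hQ'proper hsub
    exact hmax ⟨hQ', hMQ'.trans hsub, hQ'proper⟩ hsub
  · intro c hcS hchain hcne
    refine ⟨⋃₀ c, ⟨?_, ?_, ?_⟩, fun s hs => Set.subset_sUnion_of_mem hs⟩
    · constructor
      · rintro a b ⟨Qa, hQa, ha⟩ ⟨Qb, hQb, hb⟩
        rcases hchain.total hQa hQb with h | h
        · exact ⟨Qb, hQb, (hcS hQb).1.add_mem (h ha) hb⟩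
        · exact ⟨Qa, hQa, (hcS hQa).1.add_mem ha (h hb)⟩
      · rintro a q ⟨Qa, hQa, ha⟩
        exact ⟨Qa, hQa, (hcS hQa).1.sq_mul_mem a ha⟩
      · intro a
        obtain ⟨Q0, hQ0⟩ := hcne
        exact ⟨Q0, hQ0, (hcS hQ0).1.sq_mem a⟩
    · obtain ⟨Q0, hQ0⟩ := hcne
      exact fun a ha => ⟨Q0, hQ0, (hcS hQ0).2.1 ha⟩
    · rintro ⟨Q0, hQ0, hmem⟩
      exact (hcS hQ0).2.2 hmem

/-- A maximal proper quadratic module satisfies `Q ∪ -Q = A`. -/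
theorem union_property {Q : Set (A g)} (hQ : IsQM Q) (hproper : (-1 : A g) ∉ Q)
    (hmax : ∀ Q' : Set (A g), IsQM Q' → (-1 : A g) ∉ Q' → Q ⊆ Q' → Q' ⊆ Q)
    (a : A g) : a ∈ Q ∨ -a ∈ Q := by
  by_contra hcon
  push_neg at hcon
  obtain ⟨ha, hna⟩ := hcon
  -- the extensions by a and -a must both be improper
  have himp1 : (-1 : A g) ∈ ext Q a := by
    by_contra h1
    exact ha ((hmax _ (hQ.isQM_ext a) h1 (subset_ext Q a)) (mem_ext Q hQ a))
  have himp2 : (-1 : A g) ∈ ext Q (-a) := by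
    by_contra h2
    exact hna ((hmax _ (hQ.isQM_ext (-a)) h2 (subset_ext Q (-a))) (mem_ext Q hQ (-a)))
  obtain ⟨q1, hq1, s1, hs1, he1⟩ := himp1
  obtain ⟨q2, hq2, s2, hs2, he2⟩ := himp2
  -- w := a * s1 * s2 belongs to Q and -Q
  have hw1 : a * s1 * s2 ∈ Q := by
    have h3 : a * s1 * s2 = s1 + s1 * q2 := by linear_combination s1 * he2
    rw [h3]
    exact hQ.add_mem (hQ.sumSq_mem hs1) (hQ.sumSq_mul_mem hs1 hq2)
  have hw2 : -(a * s1 * s2) ∈ Q := by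
    have h3 : -(a * s1 * s2) = s2 + s2 * q1 := by linear_combination s2 * he1
    rw [h3]
    exact hQ.add_mem (hQ.sumSq_mem hs2) (hQ.sumSq_mul_mem hs2 hq1)
  -- hence -s2 ∈ Q
  have hs2' : -s2 ∈ Q := by
    have h3 : -s2 = s2 * q1 + a * s1 * s2 := by linear_combination s2 * he1
    rw [h3]
    exact hQ.add_mem (hQ.sumSq_mul_mem hs2 hq1) hw1
  -- a * s2 ∈ Q and -(a * s2) ∈ Q via the square decomposition of a
  have hsq : ∀ b t : A g, t ∈ Q → (C (4⁻¹:ℝ) : A g) * (b*b*t) ∈ Q := fun b t ht =>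
    hQ.smul_mem (by norm_num) (hQ.sq_mul_mem b ht)
  have h45 : (C (4⁻¹:ℝ) : A g) * 4 = 1 := by
    rw [← map_ofNat (C : ℝ →+* A g) 4, ← C_mul]; norm_num
  have hnas2 : -(a * s2) ∈ Q := by
    have h6 : -(a * s2) = C (4⁻¹:ℝ) * ((a-1)*(a-1)*s2) + C (4⁻¹:ℝ) * ((a+1)*(a+1)*(-s2)) := by
      linear_combination (a * s2) * h45
    rw [h6]
    exact hQ.add_mem (hsq _ _ (hQ.sumSq_mem hs2)) (hsq _ _ hs2')
  apply hproper
  rw [he2, show ((-a) * s2 : A g) = -(a * s2) by ring]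
  exact hQ.add_mem hq2 hnas2

end IsQM
namespace Semiord

open IsQM

variable {g : ℕ} {Q : Set (A g)}

/-- The data we carry around: an archimedean proper semiordering. -/
structure Good (Q : Set (A g)) : Prop where
  qm : IsQM Q
  proper : (-1 : A g) ∉ Q
  union : ∀ a : A g, a ∈ Q ∨ -a ∈ Q
  arch : ∀ a : A g, ∃ N : ℝ, 0 < N ∧ C N - a ∈ Q ∧ C N + a ∈ Q

def Sset (Q : Set (A g)) (a : A g) : Set ℝ := {lam : ℝ | C lam - a ∈ Q}

noncomputable def phi (Q : Set (A g)) (a : A g) : ℝ := sInf (Sset Q a)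

variable (hG : Good Q)

theorem const_nonneg (hG : Good Q) {c : ℝ} (h : (C c : A g) ∈ Q) : 0 ≤ c := by
  by_contra hneg
  exact hG.qm.neg_const_not_mem hG.proper (by linarith) h

theorem upward (hG : Good Q) {a : A g} {lam mu : ℝ} (h : lam ∈ Sset Q a) (hle : lam ≤ mu) :
    mu ∈ Sset Q a := by
  have h2 : (C mu - a : A g) = (C lam - a) + C (mu - lam) := by
    rw [map_sub]; ring
  show (C mu - a : A g) ∈ Q
  rw [h2]
  exact hG.qm.add_mem h (hG.qm.const_mem (by linarith))

theorem Sset_nonempty (hG : Good Q) (a : A g) : (Sset Q a).Nonempty := by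
  obtain ⟨N, _, h1, _⟩ := hG.arch a
  exact ⟨N, h1⟩

theorem Sset_bddBelow (hG : Good Q) (a : A g) : BddBelow (Sset Q a) := by
  obtain ⟨N, _, _, h2⟩ := hG.arch a
  refine ⟨-N, fun lam hlam => ?_⟩
  have hsum : (C (lam + N) : A g) ∈ Q := by
    rw [show (C (lam + N) : A g) = (C lam - a) + (C N + a) by rw [map_add]; ring]
    exact hG.qm.add_mem hlam h2
  linarith [const_nonneg hG hsum]

theorem phi_le (hG : Good Q) {a : A g} {lam : ℝ} (h : lam ∈ Sset Q a) : phi Q a ≤ lam :=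
  csInf_le (Sset_bddBelow hG a) h

theorem le_phi (hG : Good Q) {a : A g} {b : ℝ} (h : ∀ lam ∈ Sset Q a, b ≤ lam) : b ≤ phi Q a :=
  le_csInf (Sset_nonempty hG a) h

theorem phi_add_eps (hG : Good Q) (a : A g) {eps : ℝ} (heps : 0 < eps) :
    phi Q a + eps ∈ Sset Q a := by
  have hlt : sInf (Sset Q a) < phi Q a + eps := by
    have : phi Q a = sInf (Sset Q a) := rfl
    linarith
  obtain ⟨lam, hlam, hlt⟩ := exists_lt_of_csInf_lt (Sset_nonempty hG a) hlt
  exact upward hG hlam hlt.le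

theorem not_mem_compl (hG : Good Q) {a : A g} {lam : ℝ} (h : lam ∉ Sset Q a) :
    a - C lam ∈ Q := by
  rcases hG.union (C lam - a) with h1 | h1
  · exact absurd h1 h
  · rwa [neg_sub] at h1

theorem lt_phi_compl (hG : Good Q) {a : A g} {lam : ℝ} (h : lam < phi Q a) :
    a - C lam ∈ Q := by
  refine not_mem_compl hG fun hmem => ?_
  exact absurd (phi_le hG hmem) (by linarith)

theorem phi_C (hG : Good Q) (t : ℝ) : phi Q (C t) = t := by
  refine le_antisymm (phi_le hG ?_) (le_phi hG fun lam hlam => ?_)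
  · show (C t - C t : A g) ∈ Q
    rw [sub_self]; exact hG.qm.zero_mem
  · have hlam' : (C lam - C t : A g) ∈ Q := hlam
    have h2 : (C (lam - t) : A g) ∈ Q := by rw [map_sub]; exact hlam'
    linarith [const_nonneg hG h2]

theorem phi_add (hG : Good Q) (a b : A g) : phi Q (a + b) = phi Q a + phi Q b := by
  have hle : phi Q (a + b) ≤ phi Q a + phi Q b := by
    have h : ∀ eps : ℝ, 0 < eps → phi Q (a+b) ≤ phi Q a + phi Q b + eps := by
      intro eps heps
      have h1 := phi_add_eps hG a (half_pos heps)
      have h2 := phi_add_eps hG b (half_pos heps)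
      have h3 : (phi Q a + eps/2) + (phi Q b + eps/2) ∈ Sset Q (a + b) := by
        show (C (phi Q a + eps/2 + (phi Q b + eps/2)) - (a+b) : A g) ∈ Q
        rw [show (C (phi Q a + eps/2 + (phi Q b + eps/2)) - (a+b) : A g)
            = (C (phi Q a + eps/2) - a) + (C (phi Q b + eps/2) - b) by rw [map_add]; ring]
        exact hG.qm.add_mem h1 h2
      have := phi_le hG h3
      linarith
    by_contra hcon
    push_neg at hcon
    have := h ((phi Q (a+b) - (phi Q a + phi Q b))/2) (by linarith)
    linarith
  have hge : phi Q a + phi Q b ≤ phi Q (a + b) := by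
    refine le_phi hG fun lam hlam => ?_
    by_contra hcon
    push_neg at hcon
    set eps := (phi Q a + phi Q b - lam)/3 with hepsdef
    have heps : 0 < eps := by rw [hepsdef]; linarith
    have h1 : a - C (phi Q a - eps) ∈ Q := lt_phi_compl hG (by linarith)
    have h2 : b - C (phi Q b - eps) ∈ Q := lt_phi_compl hG (by linarith)
    have h3 : (C (lam - (phi Q a - eps) - (phi Q b - eps)) : A g) ∈ Q := by
      rw [show (C (lam - (phi Q a - eps) - (phi Q b - eps)) : A g)
          = (C lam - (a+b)) + (a - C (phi Q a - eps)) + (b - C (phi Q b - eps)) by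
        rw [map_sub, map_sub]; ring]
      exact hG.qm.add_mem (hG.qm.add_mem hlam h1) h2
    have := const_nonneg hG h3
    rw [hepsdef] at this
    linarith
  linarith

theorem phi_zero (hG : Good Q) : phi Q 0 = 0 := by
  have := phi_C hG 0
  rwa [map_zero] at this

theorem phi_neg (hG : Good Q) (a : A g) : phi Q (-a) = - phi Q a := by
  have h := phi_add hG a (-a)
  rw [add_neg_cancel, phi_zero hG] at h
  linarith

theorem phi_nonneg (hG : Good Q) {a : A g} (h : a ∈ Q) : 0 ≤ phi Q a := by
  refine le_phi hG fun lam hlam => ?_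
  have : (C lam : A g) ∈ Q := by
    rw [show (C lam : A g) = (C lam - a) + a by ring]
    exact hG.qm.add_mem hlam h
  exact const_nonneg hG this

theorem phi_smul (hG : Good Q) (t : ℝ) (a : A g) : phi Q (C t * a) = t * phi Q a := by
  -- first the case t > 0, one inequality
  have key : ∀ u : ℝ, 0 < u → ∀ b : A g, phi Q (C u * b) ≤ u * phi Q b := by
    intro u hu b
    have h : ∀ eps : ℝ, 0 < eps → phi Q (C u * b) ≤ u * (phi Q b + eps) := by
      intro eps heps
      have h1 := phi_add_eps hG b heps
      have h2 : u * (phi Q b + eps) ∈ Sset Q (C u * b) := by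
        show (C (u * (phi Q b + eps)) - C u * b : A g) ∈ Q
        rw [show (C (u * (phi Q b + eps)) - C u * b : A g)
            = C u * (C (phi Q b + eps) - b) by rw [C_mul, mul_sub]]
        exact hG.qm.smul_mem hu.le h1
      exact phi_le hG h2
    by_contra hcon
    push_neg at hcon
    set d := phi Q (C u * b) - u * phi Q b with hd
    have hdpos : 0 < d := by rw [hd]; linarith
    have h9 := h (d/(2*u)) (div_pos hdpos (by positivity))
    have h10 : u * (phi Q b + d/(2*u)) = u * phi Q b + d/2 := by field_simp
    rw [h10] at h9
    rw [hd] at h9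
    linarith
  rcases lt_trichotomy t 0 with ht | ht | ht
  · have h1 : phi Q (C (-t) * a) = (-t) * phi Q a := by
      have hle := key (-t) (by linarith) a
      have hge : (-t) * phi Q a ≤ phi Q (C (-t) * a) := by
        have hpos : 0 < -t := by linarith
        have h2 := key (-t)⁻¹ (inv_pos.mpr hpos) (C (-t) * a)
        rw [show (C (-t)⁻¹ * (C (-t) * a) : A g) = a by
          rw [← mul_assoc, ← C_mul, inv_mul_cancel₀ (by linarith : (-t) ≠ 0), C_1, one_mul]] at h2
        calc (-t) * phi Q a ≤ (-t) * ((-t)⁻¹ * phi Q (C (-t) * a)) :=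
              mul_le_mul_of_nonneg_left h2 hpos.le
            _ = phi Q (C (-t) * a) := by
              rw [← mul_assoc, mul_inv_cancel₀ hpos.ne', one_mul]
      linarith
    have h3 : phi Q (C t * a) = - phi Q (C (-t) * a) := by
      rw [show (C t * a : A g) = -(C (-t) * a) by rw [map_neg]; ring]
      exact phi_neg hG _
    rw [h3, h1]; ring
  · subst ht; rw [map_zero, zero_mul, phi_zero hG, zero_mul]
  · have hle := key t ht a
    have hge : t * phi Q a ≤ phi Q (C t * a) := by
      have h2 := key t⁻¹ (by positivity) (C t * a)
      rw [show (C t⁻¹ * (C t * a) : A g) = a by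
        rw [← mul_assoc, ← C_mul, inv_mul_cancel₀ ht.ne', C_1, one_mul]] at h2
      calc t * phi Q a ≤ t * (t⁻¹ * phi Q (C t * a)) :=
            mul_le_mul_of_nonneg_left h2 ht.le
          _ = phi Q (C t * a) := by
            rw [← mul_assoc, mul_inv_cancel₀ ht.ne', one_mul]
    linarith

theorem phi_sq_of_zero (hG : Good Q) {b : A g} (hb : phi Q b = 0) : phi Q (b * b) = 0 := by
  have hge : 0 ≤ phi Q (b * b) := phi_nonneg hG (hG.qm.sq_mem b)
  have hle : ∀ delta : ℝ, 0 < delta → phi Q (b * b) ≤ delta^2 := by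
    intro delta hdelta
    have h1 : (C delta - b : A g) ∈ Q := by
      have := phi_add_eps hG b hdelta
      rwa [hb, zero_add] at this
    have h2 : (C delta + b : A g) ∈ Q := by
      have h3 := phi_add_eps hG (-b) hdelta
      rw [phi_neg hG, hb, neg_zero, zero_add] at h3
      have : (C delta - -b : A g) ∈ Q := h3
      rwa [sub_neg_eq_add] at this
    -- constant-sum product trick
    have h4 : (C delta + b) * (C delta + b) * (C delta - b) ∈ Q := hG.qm.sq_mul_mem _ h1
    have h5 : (C delta - b) * (C delta - b) * (C delta + b) ∈ Q := hG.qm.sq_mul_mem _ h2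
    have h6 : (C delta + b) * (C delta + b) * (C delta - b)
        + (C delta - b) * (C delta - b) * (C delta + b)
        = C (2 * delta) * ((C delta - b) * (C delta + b)) := by
      rw [show (C (2*delta) : A g) = C delta + C delta by rw [← C_add]; congr 1; ring]
      ring
    have h7 : C (2*delta) * ((C delta - b) * (C delta + b)) ∈ Q := by
      rw [← h6]; exact hG.qm.add_mem h4 h5
    have h8 : ((C delta - b) * (C delta + b) : A g) ∈ Q := by
      have h9 := hG.qm.smul_mem (by positivity : (0:ℝ) ≤ (2*delta)⁻¹) h7
      rwa [← mul_assoc, ← C_mul, inv_mul_cancel₀ (by positivity : (2*delta) ≠ 0), C_1,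
        one_mul] at h9
    have h10 : delta^2 ∈ Sset Q (b * b) := by
      show (C (delta^2) - b * b : A g) ∈ Q
      rw [show (C (delta^2) - b * b : A g) = (C delta - b) * (C delta + b) by
        rw [show (C (delta^2) : A g) = C delta * C delta by rw [← C_mul, sq]]
        ring]
      exact h8
    exact phi_le hG h10
  by_contra hcon
  have hpos : 0 < phi Q (b * b) := lt_of_le_of_ne hge (fun h => hcon h.symm)
  have := hle (Real.sqrt (phi Q (b*b) / 2)) (Real.sqrt_pos.mpr (by linarith))
  rw [Real.sq_sqrt (by linarith : 0 ≤ phi Q (b*b)/2)] at this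
  linarith

theorem phi_sq (hG : Good Q) (a : A g) : phi Q (a * a) = phi Q a * phi Q a := by
  set t := phi Q a with htdef
  have hb : phi Q (a - C t) = 0 := by
    rw [sub_eq_add_neg, phi_add hG, phi_neg hG, phi_C hG]; ring
  have h0 := phi_sq_of_zero hG hb
  have hexp : a * a = (a - C t) * (a - C t) + C (2*t) * (a - C t) + C (t*t) := by
    rw [show (C (2*t) : A g) = C t + C t by rw [← C_add]; congr 1; ring,
      show (C (t*t) : A g) = C t * C t by rw [← C_mul]]
    ring
  rw [hexp, phi_add hG, phi_add hG, h0, phi_smul hG, hb, phi_C hG]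
  ring

theorem phi_mul (hG : Good Q) (a b : A g) : phi Q (a * b) = phi Q a * phi Q b := by
  have h1 : C (2:ℝ) * (a * b) = (a+b) * (a+b) + (-(a*a)) + (-(b*b)) := by
    rw [show (C (2:ℝ) : A g) = 2 by exact map_ofNat _ 2]
    ring
  have h2 := phi_smul hG 2 (a * b)
  rw [h1, phi_add hG, phi_add hG, phi_sq hG, phi_neg hG, phi_neg hG, phi_sq hG, phi_sq hG,
    phi_add hG] at h2
  nlinarith [h2]

theorem phi_nonpos_of_neg_mem (hG : Good Q) {a : A g} (h : -a ∈ Q) : phi Q a ≤ 0 := by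
  have := phi_nonneg hG h
  rw [phi_neg hG] at this
  linarith

theorem phi_eval (hG : Good Q) (q : A g) :
    MvPolynomial.eval (fun i => phi Q (X i)) q = phi Q q := by
  induction q using MvPolynomial.induction_on with
  | C t => rw [phi_C hG]; simp
  | add q1 q2 h1 h2 => rw [phi_add hG]; simp [h1, h2]
  | mul_X q i h => rw [phi_mul hG]; simp [h]

end Semiord
theorem stmt_14 {g r : ℕ} (f : Fin r → MvPolynomial (Fin g) ℝ)
    (harch : ∃ C : ℝ, 0 < C ∧ InQM f (MvPolynomial.C C - ∑ i, MvPolynomial.X i ^ 2))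
    (p : MvPolynomial (Fin g) ℝ)
    (hp : ∀ x : Fin g → ℝ, (∀ i, 0 ≤ MvPolynomial.eval x (f i)) → 0 < MvPolynomial.eval x p) :
    InQM f p := by
  by_contra hcon
  set QMset : Set (A g) := {q : A g | InQM f q} with hQMdef
  have hQM : IsQM QMset := isQM_inQM
  set M₁ : Set (A g) := IsQM.ext QMset (-p) with hM₁def
  have hM₁ : IsQM M₁ := hQM.isQM_ext (-p)
  by_cases himp : (-1 : A g) ∈ M₁
  · -- Case B: p * s = 1 + q, use the iteration lemma
    obtain ⟨q, hq, s, hs, he⟩ := himp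
    have heq : p * s = 1 + q := by linear_combination he
    exact hcon (hQM.mem_of_mul_sumSq subset_rfl harch hs hq heq)
  · -- Case A: extend to a maximal proper quadratic module
    obtain ⟨Q, hM₁Q, hQ, hQproper, hQmax⟩ := hM₁.exists_maximal himp
    have hQMsub : QMset ⊆ Q := (IsQM.subset_ext QMset (-p)).trans hM₁Q
    have hG : Semiord.Good Q :=
      ⟨hQ, hQproper, hQ.union_property hQproper hQmax, hQ.bound hQMsub harch⟩
    set x₀ : Fin g → ℝ := fun i => Semiord.phi Q (X i) with hx₀
    have hfi : ∀ i, 0 ≤ MvPolynomial.eval x₀ (f i) := by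
      intro i
      rw [hx₀, Semiord.phi_eval hG]
      exact Semiord.phi_nonneg hG (hQMsub (inQM_f i))
    have hppos := hp x₀ hfi
    rw [hx₀, Semiord.phi_eval hG] at hppos
    have hnp : -p ∈ Q := hM₁Q (IsQM.mem_ext QMset hQM (-p))
    have := Semiord.phi_nonpos_of_neg_mem hG hnp
    linarith
end

section
/- (Free Nichtnegativstellensatz / Helton's SOS theorem, separation step) Let Σ²_{2k} be the cone of sums of squares f*f of elements of the free *-algebra R⟨x, x*⟩ truncated at degree 2k. Then Σ²_{2k} is a closed convex cone in the finite-dimensional real vector space R⟨x, x*⟩_{2k} of noncommutative polynomials of degree ≤ 2k. -/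
/-- The involution of the free `*`-algebra `ℝ⟨x, x*⟩` on `2g` generators, realized on the
monoid algebra of the free monoid on `Fin g ⊕ Fin g` (left summand: `xⱼ`, right summand:
`xⱼ*`): it reverses words and exchanges `xⱼ` with `xⱼ*`. -/
noncomputable def ncStar {g : ℕ} (p : MonoidAlgebra ℝ (FreeMonoid (Fin g ⊕ Fin g))) :
    MonoidAlgebra ℝ (FreeMonoid (Fin g ⊕ Fin g)) :=
  MonoidAlgebra.mapDomain
    (fun w => FreeMonoid.ofList (((FreeMonoid.toList w).map Sum.swap).reverse)) p

/-- Words of length at most `2k` in the `2g` letters, encoded as a (finite) sigma type. -/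
abbrev TruncWord (g k : ℕ) := Σ i : Fin (2 * k + 1), Fin i.val → (Fin g ⊕ Fin g)

/-- The noncommutative polynomial of degree at most `2k` with coefficient function `c`. -/
noncomputable def truncPoly {g k : ℕ} (c : TruncWord g k → ℝ) :
    MonoidAlgebra ℝ (FreeMonoid (Fin g ⊕ Fin g)) :=
  ∑ w : TruncWord g k, MonoidAlgebra.single (FreeMonoid.ofList (List.ofFn w.2)) (c w)


set_option linter.unusedSectionVars false
set_option maxHeartbeats 1000000

section Part1
variable {g : ℕ}



/-- star on a single word -/
def ncS {g : ℕ} (w : FreeMonoid (Fin g ⊕ Fin g)) : FreeMonoid (Fin g ⊕ Fin g) :=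
  FreeMonoid.ofList (((FreeMonoid.toList w).map Sum.swap).reverse)

def wlen {g : ℕ} (m : FreeMonoid (Fin g ⊕ Fin g)) : ℕ := (FreeMonoid.toList m).length

lemma len_ncS (w : FreeMonoid (Fin g ⊕ Fin g)) : wlen (ncS w) = wlen w := by
  simp [ncS, wlen]

lemma ncS_ncS (w : FreeMonoid (Fin g ⊕ Fin g)) : ncS (ncS w) = w := by
  simp [ncS, List.map_reverse, List.map_map, Function.comp_def]

lemma ncS_inj : Function.Injective (ncS (g := g)) :=
  Function.Involutive.injective ncS_ncS

lemma len_mul (a b : FreeMonoid (Fin g ⊕ Fin g)) : wlen (a * b) = wlen a + wlen b := by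
  simp [wlen, FreeMonoid.toList_mul]

lemma toList_inj {a b : FreeMonoid (Fin g ⊕ Fin g)}
    (h : FreeMonoid.toList a = FreeMonoid.toList b) : a = b := by
  have := congrArg FreeMonoid.ofList h
  simpa [FreeMonoid.ofList_toList] using this

lemma split_eq {a b w : FreeMonoid (Fin g ⊕ Fin g)} (ha : wlen a ≤ wlen w)
    (hb : wlen b ≤ wlen w) (h : ncS a * b = ncS w * w) : a = w ∧ b = w := by
  have hl : wlen a + wlen b = wlen w + wlen w := by
    have := congrArg wlen h
    simpa [len_mul, len_ncS] using this
  have ha' : wlen a = wlen w := by omega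
  have h2 : FreeMonoid.toList (ncS a) ++ FreeMonoid.toList b
      = FreeMonoid.toList (ncS w) ++ FreeMonoid.toList w := by
    simpa [FreeMonoid.toList_mul] using congrArg FreeMonoid.toList h
  have hlen : (FreeMonoid.toList (ncS a)).length = (FreeMonoid.toList (ncS w)).length := by
    show wlen (ncS a) = wlen (ncS w)
    rw [len_ncS, len_ncS, ha']
  obtain ⟨h3, h4⟩ := List.append_inj h2 hlen
  exact ⟨ncS_inj (toList_inj h3), toList_inj h4⟩

end Part1

instance freeMonoidDecEq {g : ℕ} : DecidableEq (FreeMonoid (Fin g ⊕ Fin g)) :=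
  inferInstanceAs (DecidableEq (List (Fin g ⊕ Fin g)))

section Part2
variable {g : ℕ}









lemma ncStar_eq_sum (f : MonoidAlgebra ℝ (FreeMonoid (Fin g ⊕ Fin g))) :
    ncStar f = ∑ a ∈ f.coeff.support, MonoidAlgebra.single (ncS a) (f.coeff a) := by
  apply MonoidAlgebra.coeff_injective
  rw [MonoidAlgebra.coeff_sum]
  have h1 : (ncStar f).coeff = Finsupp.mapDomain ncS f.coeff := rfl
  rw [h1]
  conv_lhs => rw [← Finsupp.sum_single f.coeff]
  rw [Finsupp.sum, Finsupp.mapDomain_finset_sum]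
  exact Finset.sum_congr rfl fun a _ => Finsupp.mapDomain_single

lemma f_eq_sum (f : MonoidAlgebra ℝ (FreeMonoid (Fin g ⊕ Fin g))) :
    f = ∑ a ∈ f.coeff.support, MonoidAlgebra.single a (f.coeff a) := by
  apply MonoidAlgebra.coeff_injective
  rw [MonoidAlgebra.coeff_sum]
  conv_lhs => rw [← Finsupp.sum_single f.coeff]
  rfl

lemma ncStar_support (f : MonoidAlgebra ℝ (FreeMonoid (Fin g ⊕ Fin g))) :
    (ncStar f).coeff.support = f.coeff.support.image ncS :=
  Finsupp.mapDomain_support_of_injective ncS_inj f.coeff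

lemma ncStar_apply (f : MonoidAlgebra ℝ (FreeMonoid (Fin g ⊕ Fin g)))
    (a : FreeMonoid (Fin g ⊕ Fin g)) : (ncStar f).coeff (ncS a) = f.coeff a :=
  Finsupp.mapDomain_apply ncS_inj f.coeff a

lemma mul_coeff (p q : MonoidAlgebra ℝ (FreeMonoid (Fin g ⊕ Fin g)))
    (m : FreeMonoid (Fin g ⊕ Fin g)) :
    (ncStar p * q).coeff m = ∑ a ∈ p.coeff.support, ∑ b ∈ q.coeff.support,
      (if ncS a * b = m then p.coeff a * q.coeff b else 0) := by
  rw [MonoidAlgebra.coeff_mul, Finsupp.sum, ncStar_support,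
    Finset.sum_image (fun a _ b _ h => ncS_inj h)]
  refine Finset.sum_congr rfl fun a _ => ?_
  rw [Finsupp.sum]
  refine Finset.sum_congr rfl fun b _ => ?_
  simp [ncStar_apply]

lemma coeff_max (f : MonoidAlgebra ℝ (FreeMonoid (Fin g ⊕ Fin g)))
    (w : FreeMonoid (Fin g ⊕ Fin g)) (h : ∀ a ∈ f.coeff.support, wlen a ≤ wlen w) :
    (ncStar f * f).coeff (ncS w * w) = (f.coeff w) ^ 2 := by
  rw [mul_coeff]
  by_cases hw : w ∈ f.coeff.support
  · rw [Finset.sum_eq_single_of_mem w hw]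
    · rw [Finset.sum_eq_single_of_mem w hw]
      · simp [pow_two]
      · intro b hb hbw
        rw [if_neg]
        intro hc
        exact hbw (split_eq (le_refl _) (h b hb) hc).2
    · intro a ha haw
      apply Finset.sum_eq_zero
      intro b hb
      rw [if_neg]
      intro hc
      exact haw (split_eq (h a ha) (h b hb) hc).1
  · have hfw : f.coeff w = 0 := Finsupp.notMem_support_iff.mp hw
    rw [hfw]
    rw [Finset.sum_eq_zero, zero_pow (by norm_num)]
    intro a ha
    apply Finset.sum_eq_zero
    intro b hb
    rw [if_neg]
    intro hc
    exact hw ((split_eq (h a ha) (h b hb) hc).1 ▸ ha)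

end Part2

section Part3
variable {g K : ℕ}


abbrev Wrd (g K : ℕ) := Σ i : Fin (K + 1), Fin i.val → (Fin g ⊕ Fin g)

def wrd {g K : ℕ} (w : Wrd g K) : FreeMonoid (Fin g ⊕ Fin g) :=
  FreeMonoid.ofList (List.ofFn w.2)


lemma len_wrd (w : Wrd g K) : wlen (wrd w) = w.1.val := by
  simp [wrd, wlen]

lemma wrd_inj : Function.Injective (wrd (g := g) (K := K)) := by
  rintro ⟨i, a⟩ ⟨j, b⟩ h
  have h' : List.ofFn a = List.ofFn b := by
    have := congrArg FreeMonoid.toList h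
    simpa [wrd] using this
  have hij : i = j := by
    have := congrArg List.length h'
    simp at this
    exact Fin.ext this
  subst hij
  have hab : a = b := by
    funext m
    have := List.ofFn_injective h'
    exact congrFun this m
  rw [hab]

lemma exists_wrd (m : FreeMonoid (Fin g ⊕ Fin g)) (h : wlen m ≤ K) :
    ∃ w : Wrd g K, wrd w = m := by
  refine ⟨⟨⟨wlen m, by omega⟩, fun j => (FreeMonoid.toList m).get ⟨j.val, j.isLt⟩⟩, ?_⟩
  show FreeMonoid.ofList (List.ofFn (FreeMonoid.toList m).get) = m
  rw [List.ofFn_get]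
  exact FreeMonoid.ofList_toList m

lemma sum_single_apply (c : Wrd g K → ℝ) (w₀ : Wrd g K) :
    (∑ w : Wrd g K, MonoidAlgebra.single (wrd w) (c w)).coeff (wrd w₀) = c w₀ := by
  classical
  rw [MonoidAlgebra.coeff_sum, Finsupp.finset_sum_apply, Finset.sum_eq_single w₀]
  · simp [MonoidAlgebra.coeff_single]
  · intro w _ hw
    rw [MonoidAlgebra.coeff_single, Finsupp.single_apply, if_neg (fun hc => hw (wrd_inj hc))]
  · intro h; exact absurd (Finset.mem_univ w₀) h

lemma sum_single_apply_none (c : Wrd g K → ℝ) (m : FreeMonoid (Fin g ⊕ Fin g))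
    (h : ∀ w : Wrd g K, wrd w ≠ m) :
    (∑ w : Wrd g K, MonoidAlgebra.single (wrd w) (c w)).coeff m = 0 := by
  classical
  rw [MonoidAlgebra.coeff_sum, Finsupp.finset_sum_apply]
  exact Finset.sum_eq_zero fun w _ => by
    rw [MonoidAlgebra.coeff_single, Finsupp.single_apply, if_neg (h w)]

lemma sum_single_apply_long (c : Wrd g K → ℝ) (m : FreeMonoid (Fin g ⊕ Fin g))
    (h : K < wlen m) :
    (∑ w : Wrd g K, MonoidAlgebra.single (wrd w) (c w)).coeff m = 0 := by
  apply sum_single_apply_none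
  intro w hc
  have := len_wrd w
  rw [hc] at this
  omega

lemma reconstruct (p : MonoidAlgebra ℝ (FreeMonoid (Fin g ⊕ Fin g)))
    (h : ∀ m ∈ p.coeff.support, wlen m ≤ K) :
    (∑ w : Wrd g K, MonoidAlgebra.single (wrd w) (p.coeff (wrd w))) = p := by
  classical
  ext m
  by_cases hm : ∃ w : Wrd g K, wrd w = m
  · obtain ⟨w, rfl⟩ := hm
    exact sum_single_apply _ w
  · push_neg at hm
    rw [sum_single_apply_none _ m hm]
    by_contra hp
    have hms : m ∈ p.coeff.support := Finsupp.mem_support_iff.mpr (fun h0 => hp h0.symm)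
    obtain ⟨w, hw⟩ := exists_wrd m (h m hms)
    exact hm w hw

end Part3

section Part4
variable {g k : ℕ}









/-- the polynomial with coefficient vector `v` supported in degree ≤ k -/
noncomputable def vecPoly (v : Wrd g k → ℝ) : MonoidAlgebra ℝ (FreeMonoid (Fin g ⊕ Fin g)) :=
  ∑ a : Wrd g k, MonoidAlgebra.single (wrd a) (v a)

/-- the polynomial associated to a Gram matrix -/
noncomputable def gram (G : Wrd g k → Wrd g k → ℝ) :
    MonoidAlgebra ℝ (FreeMonoid (Fin g ⊕ Fin g)) :=
  ∑ a : Wrd g k, ∑ b : Wrd g k, MonoidAlgebra.single (ncS (wrd a) * wrd b) (G a b)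

lemma ncStar_vecPoly (v : Wrd g k → ℝ) :
    ncStar (vecPoly v) = ∑ a : Wrd g k, MonoidAlgebra.single (ncS (wrd a)) (v a) := by
  apply MonoidAlgebra.coeff_injective
  rw [MonoidAlgebra.coeff_sum]
  show Finsupp.mapDomain ncS (vecPoly v).coeff = _
  rw [vecPoly, MonoidAlgebra.coeff_sum, Finsupp.mapDomain_finset_sum]
  exact Finset.sum_congr rfl fun a _ => Finsupp.mapDomain_single

lemma sq_eq_gram (v : Wrd g k → ℝ) :
    ncStar (vecPoly v) * vecPoly v = gram (fun a b => v a * v b) := by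
  rw [ncStar_vecPoly, vecPoly, Finset.sum_mul_sum, gram]
  exact Finset.sum_congr rfl fun a _ => Finset.sum_congr rfl fun b _ =>
    MonoidAlgebra.single_mul_single _ _ _ _

lemma gram_sum {ι : Type*} [Fintype ι] (G : ι → Wrd g k → Wrd g k → ℝ) :
    gram (fun a b => ∑ j, G j a b) = ∑ j, gram (G j) := by
  unfold gram
  calc (∑ a : Wrd g k, ∑ b : Wrd g k,
        MonoidAlgebra.single (ncS (wrd a) * wrd b) (∑ j, G j a b))
      = ∑ a : Wrd g k, ∑ b : Wrd g k, ∑ j,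
          MonoidAlgebra.single (ncS (wrd a) * wrd b) (G j a b) :=
        Finset.sum_congr rfl fun a _ => Finset.sum_congr rfl fun b _ =>
          map_sum (MonoidAlgebra.singleAddHom _) _ _
    _ = ∑ a : Wrd g k, ∑ j, ∑ b : Wrd g k,
          MonoidAlgebra.single (ncS (wrd a) * wrd b) (G j a b) :=
        Finset.sum_congr rfl fun a _ => Finset.sum_comm
    _ = ∑ j, ∑ a : Wrd g k, ∑ b : Wrd g k,
          MonoidAlgebra.single (ncS (wrd a) * wrd b) (G j a b) := Finset.sum_comm

lemma gram_add (G G' : Wrd g k → Wrd g k → ℝ) :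
    gram (fun a b => G a b + G' a b) = gram G + gram G' := by
  unfold gram
  rw [← Finset.sum_add_distrib]
  refine Finset.sum_congr rfl fun a _ => ?_
  rw [← Finset.sum_add_distrib]
  exact Finset.sum_congr rfl fun b _ => MonoidAlgebra.single_add _ _ _

lemma gram_smul (t : ℝ) (G : Wrd g k → Wrd g k → ℝ) :
    gram (fun a b => t * G a b) = t • gram G := by
  unfold gram
  rw [Finset.smul_sum]
  refine Finset.sum_congr rfl fun a _ => ?_
  rw [Finset.smul_sum]
  refine Finset.sum_congr rfl fun b _ => ?_
  rw [MonoidAlgebra.smul_single]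
  rfl

lemma gram_apply_long (G : Wrd g k → Wrd g k → ℝ) (m : FreeMonoid (Fin g ⊕ Fin g))
    (h : 2 * k < wlen m) : (gram G).coeff m = 0 := by
  rw [gram, MonoidAlgebra.coeff_sum, Finsupp.finset_sum_apply]
  refine Finset.sum_eq_zero fun a _ => ?_
  rw [MonoidAlgebra.coeff_sum, Finsupp.finset_sum_apply]
  refine Finset.sum_eq_zero fun b _ => ?_
  rw [MonoidAlgebra.coeff_single, Finsupp.single_apply, if_neg]
  intro hc
  have h1 : wlen (ncS (wrd a) * wrd b) = a.1.val + b.1.val := by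
    rw [len_mul, len_ncS, len_wrd, len_wrd]
  have ha := a.1.isLt
  have hb := b.1.isLt
  rw [hc] at h1
  omega

lemma gram_support (G : Wrd g k → Wrd g k → ℝ) :
    ∀ m ∈ (gram G).coeff.support, wlen m ≤ 2 * k := by
  intro m hm
  by_contra h
  exact (Finsupp.mem_support_iff.mp hm) (gram_apply_long G m (by omega))

end Part4

section Part5
variable {n : Type*} [Fintype n] [DecidableEq n]


/-- quadratic form of `G` at `x` -/
def qf (x : n → ℝ) (G : n → n → ℝ) : ℝ := ∑ a, ∑ b, x a * G a b * x b

lemma psd_iff (G : n → n → ℝ) :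
    (Matrix.of G).PosSemidef ↔ (∀ a b, G a b = G b a) ∧ ∀ x, 0 ≤ qf x G := by
  rw [Matrix.posSemidef_iff_dotProduct_mulVec]
  constructor
  · rintro ⟨hherm, hpos⟩
    constructor
    · intro a b
      have := congrFun (congrFun hherm b) a
      simpa [Matrix.conjTranspose_apply] using this
    · intro x
      have := hpos x
      simpa [dotProduct, Matrix.mulVec, qf, Finset.mul_sum, mul_assoc,
        mul_comm, mul_left_comm] using this
  · rintro ⟨hsym, hpos⟩
    constructor
    · ext a b
      simpa [Matrix.conjTranspose_apply] using (hsym b a)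
    · intro x
      have := hpos x
      simpa [dotProduct, Matrix.mulVec, qf, Finset.mul_sum, mul_assoc,
        mul_comm, mul_left_comm] using this

lemma qf_isLinear (x : n → ℝ) : IsLinearMap ℝ (qf x) := by
  constructor
  · intro G G'
    unfold qf
    rw [← Finset.sum_add_distrib]
    refine Finset.sum_congr rfl fun a _ => ?_
    rw [← Finset.sum_add_distrib]
    refine Finset.sum_congr rfl fun b _ => ?_
    simp [Pi.add_apply]; ring
  · intro t G
    unfold qf
    rw [Finset.smul_sum]
    refine Finset.sum_congr rfl fun a _ => ?_
    rw [Finset.smul_sum]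
    refine Finset.sum_congr rfl fun b _ => ?_
    simp [Pi.smul_apply, smul_eq_mul]; ring

lemma qf_continuous (x : n → ℝ) : Continuous (qf x) := by
  unfold qf
  refine continuous_finset_sum _ fun a _ => continuous_finset_sum _ fun b _ => ?_
  fun_prop

lemma psd_isClosed : IsClosed {G : n → n → ℝ | (Matrix.of G).PosSemidef} := by
  have he : {G : n → n → ℝ | (Matrix.of G).PosSemidef}
      = (⋂ (a : n) (b : n), {G : n → n → ℝ | G a b = G b a}) ∩
        (⋂ x : n → ℝ, {G | 0 ≤ qf x G}) := by
    ext G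
    simp only [Set.mem_inter_iff, Set.mem_iInter, Set.mem_setOf_eq, psd_iff]
  rw [he]
  refine IsClosed.inter ?_ ?_
  · refine isClosed_iInter fun a => isClosed_iInter fun b => ?_
    exact isClosed_eq ((continuous_apply b).comp (continuous_apply a))
      ((continuous_apply a).comp (continuous_apply b))
  · exact isClosed_iInter fun x => isClosed_le continuous_const (qf_continuous x)

lemma psd_convex : Convex ℝ {G : n → n → ℝ | (Matrix.of G).PosSemidef} := by
  intro G hG G' hG' s t hs ht hst
  rw [Set.mem_setOf_eq, psd_iff] at *
  obtain ⟨hG1, hG2⟩ := hG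
  obtain ⟨hG'1, hG'2⟩ := hG'
  constructor
  · intro a b
    simp [hG1 a b, hG'1 a b]
  · intro x
    have h1 : qf x (s • G + t • G') = s * qf x G + t * qf x G' := by
      rw [(qf_isLinear x).map_add, (qf_isLinear x).map_smul, (qf_isLinear x).map_smul]
      simp [smul_eq_mul]
    rw [h1]
    exact add_nonneg (mul_nonneg hs (hG2 x)) (mul_nonneg ht (hG'2 x))

lemma psd_smul (t : ℝ) (ht : 0 ≤ t) (G : n → n → ℝ) (hG : (Matrix.of G).PosSemidef) :
    (Matrix.of (t • G)).PosSemidef := by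
  rw [psd_iff] at *
  obtain ⟨h1, h2⟩ := hG
  refine ⟨fun a b => by simp [h1 a b], fun x => ?_⟩
  have : qf x (t • G) = t * qf x G := by
    rw [(qf_isLinear x).map_smul]; simp [smul_eq_mul]
  rw [this]
  exact mul_nonneg ht (h2 x)

open scoped MatrixOrder in
lemma psd_decomp (G : n → n → ℝ) (h : (Matrix.of G).PosSemidef) :
    ∃ B : n → n → ℝ, ∀ a b, G a b = ∑ j, B j a * B j b := by
  obtain ⟨X, hX, -, hB⟩ := CFC.exists_sqrt_of_isSelfAdjoint_of_quasispectrumRestricts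
    (a := Matrix.of G) h.isHermitian (QuasispectrumRestricts.nnreal_of_nonneg h.nonneg)
  refine ⟨fun j a => X j a, fun a b => ?_⟩
  have hs : ∀ i j, X j i = X i j := fun i j => by
    simpa [Matrix.star_apply] using congrFun (congrFun hX.star_eq i) j
  have := congrFun (congrFun hB a) b
  simp only [Matrix.mul_apply, Matrix.of_apply] at this
  rw [← this]
  exact Finset.sum_congr rfl fun j _ => by rw [hs j a]

lemma psd_of_decomp {N : ℕ} (v : Fin N → n → ℝ) :
    (Matrix.of (fun a b => ∑ j, v j a * v j b) : Matrix n n ℝ).PosSemidef := by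
  have h : (Matrix.of (fun a b => ∑ j, v j a * v j b) : Matrix n n ℝ)
      = (Matrix.of (fun j a => v j a) : Matrix (Fin N) n ℝ).conjTranspose
        * Matrix.of (fun j a => v j a) := by
    ext a b
    simp [Matrix.mul_apply, Matrix.conjTranspose_apply]
  rw [h]
  exact Matrix.posSemidef_conjTranspose_mul_self _

end Part5


lemma closed_image_of_cone {E F : Type*} [NormedAddCommGroup E] [NormedSpace ℝ E]
    [FiniteDimensional ℝ E] [NormedAddCommGroup F] [NormedSpace ℝ F]
    (T : E →ₗ[ℝ] F) (C : Set E) (hC : IsClosed C)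
    (hcone : ∀ t : ℝ, 0 ≤ t → ∀ x ∈ C, t • x ∈ C)
    (hker : ∀ x ∈ C, T x = 0 → x = 0) : IsClosed (T '' C) := by
  have hTc : Continuous T := T.continuous_of_finiteDimensional
  by_cases hK : (C ∩ Metric.sphere 0 1).Nonempty
  · -- the proper case: get a lower bound ε on ‖T x‖ over the unit sphere of C
    have hKcl : IsClosed (C ∩ Metric.sphere 0 1) := hC.inter Metric.isClosed_sphere
    have hKcp : IsCompact (C ∩ Metric.sphere 0 1) :=
      Metric.isCompact_of_isClosed_isBounded hKcl
        (Metric.isBounded_sphere.subset Set.inter_subset_right)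
    obtain ⟨x₀, hx₀, hmin⟩ := hKcp.exists_isMinOn hK
      (continuous_norm.comp hTc).continuousOn
    set ε := ‖T x₀‖ with hε_def
    have hx₀ne : x₀ ≠ 0 := by
      intro h0
      have := hx₀.2
      rw [h0] at this
      simp at this
    have hε : 0 < ε := by
      rw [hε_def, norm_pos_iff]
      intro h0
      exact hx₀ne (hker x₀ hx₀.1 h0)
    have hbound : ∀ x ∈ C, ε * ‖x‖ ≤ ‖T x‖ := by
      intro x hx
      by_cases hx0 : x = 0
      · simp [hx0]
      · have hnx : 0 < ‖x‖ := norm_pos_iff.mpr hx0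
        have hyC : (‖x‖⁻¹ • x) ∈ C ∩ Metric.sphere 0 1 := by
          refine ⟨hcone _ (by positivity) x hx, ?_⟩
          simp [norm_smul, abs_of_nonneg (inv_nonneg.mpr hnx.le), inv_mul_cancel₀ hnx.ne']
        have h1 : ε ≤ ‖T (‖x‖⁻¹ • x)‖ := hmin hyC
        rw [map_smul, norm_smul, norm_inv, norm_norm] at h1
        calc ε * ‖x‖ ≤ (‖x‖⁻¹ * ‖T x‖) * ‖x‖ := by
              exact mul_le_mul_of_nonneg_right h1 hnx.le
          _ = ‖T x‖ := by field_simp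
    -- sequential closedness
    apply IsSeqClosed.isClosed
    intro u y hu hy
    choose x hxC hxT using hu
    have hnorm : Filter.Tendsto (fun n => ‖u n‖) Filter.atTop (nhds ‖y‖) := hy.norm
    obtain ⟨M, hM⟩ := hnorm.bddAbove_range
    have hxball : ∀ n, x n ∈ C ∩ Metric.closedBall 0 (M / ε) := by
      intro n
      refine ⟨hxC n, ?_⟩
      rw [Metric.mem_closedBall, dist_zero_right]
      have h1 : ε * ‖x n‖ ≤ ‖u n‖ := by
        have := hbound (x n) (hxC n)
        rwa [hxT n] at this
      have h2 : ‖u n‖ ≤ M := hM ⟨n, rfl⟩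
      rw [le_div_iff₀ hε]
      linarith [mul_comm ε ‖x n‖]
    have hscp : IsCompact (C ∩ Metric.closedBall 0 (M / ε)) :=
      Metric.isCompact_of_isClosed_isBounded (hC.inter Metric.isClosed_closedBall)
        (Metric.isBounded_closedBall.subset Set.inter_subset_right)
    obtain ⟨xlim, hxlim, φ, hφ, hconv⟩ := hscp.tendsto_subseq hxball
    refine ⟨xlim, hxlim.1, ?_⟩
    have h3 : Filter.Tendsto (fun n => T (x (φ n))) Filter.atTop (nhds (T xlim)) :=
      (hTc.tendsto xlim).comp hconv
    have h4 : Filter.Tendsto (fun n => T (x (φ n))) Filter.atTop (nhds y) := by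
      have : (fun n => T (x (φ n))) = fun n => u (φ n) := funext fun n => hxT (φ n)
      rw [this]
      exact hy.comp hφ.tendsto_atTop
    exact tendsto_nhds_unique h3 h4
  · -- degenerate case : C ⊆ {0}
    have hsub : C ⊆ {0} := by
      intro x hx
      by_contra hx0
      have hnx : 0 < ‖x‖ := norm_pos_iff.mpr (fun h => hx0 (by simp [h]))
      refine hK ⟨‖x‖⁻¹ • x, hcone _ (by positivity) x hx, ?_⟩
      simp [norm_smul, abs_of_nonneg (inv_nonneg.mpr hnx.le), inv_mul_cancel₀ hnx.ne']
    by_cases hCe : C.Nonempty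
    · have hCeq : C = {0} := Set.eq_singleton_iff_nonempty_unique_mem.mpr
        ⟨hCe, fun x hx => hsub hx⟩
      rw [hCeq]
      simp only [Set.image_singleton, map_zero]
      exact isClosed_singleton
    · rw [Set.not_nonempty_iff_eq_empty] at hCe
      rw [hCe, Set.image_empty]
      exact isClosed_empty



section Assembly

variable {g k : ℕ}

lemma maxword {ι : Type*} [Fintype ι] (f : ι → MonoidAlgebra ℝ (FreeMonoid (Fin g ⊕ Fin g)))
    (j₀ : ι) (hne : f j₀ ≠ 0) :
    ∃ w : FreeMonoid (Fin g ⊕ Fin g), (∃ j, w ∈ (f j).coeff.support) ∧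
      ∀ j, ∀ a ∈ (f j).coeff.support, wlen a ≤ wlen w := by
  classical
  set s := Finset.univ.biUnion (fun j : ι => (f j).coeff.support) with hs_def
  have hs : s.Nonempty := by
    obtain ⟨a, ha⟩ := Finsupp.support_nonempty_iff.mpr (MonoidAlgebra.coeff_eq_zero.not.mpr hne)
    exact ⟨a, Finset.mem_biUnion.mpr ⟨j₀, Finset.mem_univ _, ha⟩⟩
  obtain ⟨w, hw, hmax⟩ := Finset.exists_max_image s wlen hs
  obtain ⟨j, _, hj⟩ := Finset.mem_biUnion.mp hw
  exact ⟨w, ⟨j, hj⟩, fun j' a ha =>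
    hmax a (Finset.mem_biUnion.mpr ⟨j', Finset.mem_univ _, ha⟩)⟩

lemma sos_coeff {ι : Type*} [Fintype ι] (f : ι → MonoidAlgebra ℝ (FreeMonoid (Fin g ⊕ Fin g)))
    (w : FreeMonoid (Fin g ⊕ Fin g)) (h : ∀ j, ∀ a ∈ (f j).coeff.support, wlen a ≤ wlen w) :
    (∑ j, ncStar (f j) * f j).coeff (ncS w * w) = ∑ j, ((f j).coeff w) ^ 2 := by
  rw [MonoidAlgebra.coeff_sum, Finsupp.finset_sum_apply]
  exact Finset.sum_congr rfl fun j _ => coeff_max (f j) w (h j)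

lemma sos_pos {ι : Type*} [Fintype ι] (f : ι → MonoidAlgebra ℝ (FreeMonoid (Fin g ⊕ Fin g)))
    (w : FreeMonoid (Fin g ⊕ Fin g)) (j₁ : ι) (hj₁ : w ∈ (f j₁).coeff.support) :
    0 < ∑ j, ((f j).coeff w) ^ 2 := by
  refine Finset.sum_pos' (fun j _ => sq_nonneg _) ⟨j₁, Finset.mem_univ _, ?_⟩
  have := Finsupp.mem_support_iff.mp hj₁
  positivity

lemma deg_bound {ι : Type*} [Fintype ι] (c : TruncWord g k → ℝ)
    (f : ι → MonoidAlgebra ℝ (FreeMonoid (Fin g ⊕ Fin g)))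
    (h : truncPoly c = ∑ j, ncStar (f j) * f j) :
    ∀ j, ∀ a ∈ (f j).coeff.support, wlen a ≤ k := by
  by_contra hc
  push_neg at hc
  obtain ⟨j₀, a₀, ha₀, hk⟩ := hc
  have hne : f j₀ ≠ 0 := fun h0 => by simp [h0] at ha₀
  obtain ⟨w, ⟨j₁, hj₁⟩, hmax⟩ := maxword f j₀ hne
  have hwk : k < wlen w := lt_of_lt_of_le hk (hmax j₀ a₀ ha₀)
  have h1 : (truncPoly c).coeff (ncS w * w) = 0 := by
    have hlen : 2 * k < wlen (ncS w * w) := by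
      rw [len_mul, len_ncS]; omega
    exact sum_single_apply_long (K := 2 * k) c _ hlen
  have h2 : (truncPoly c).coeff (ncS w * w) = ∑ j, ((f j).coeff w) ^ 2 := by
    rw [h]; exact sos_coeff f w hmax
  have := sos_pos f w j₁ hj₁
  rw [← h2, h1] at this
  exact lt_irrefl 0 this

lemma sos_zero {ι : Type*} [Fintype ι]
    (f : ι → MonoidAlgebra ℝ (FreeMonoid (Fin g ⊕ Fin g)))
    (h : (0 : MonoidAlgebra ℝ (FreeMonoid (Fin g ⊕ Fin g))) = ∑ j, ncStar (f j) * f j) :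
    ∀ j, f j = 0 := by
  by_contra hc
  push_neg at hc
  obtain ⟨j₀, hne⟩ := hc
  obtain ⟨w, ⟨j₁, hj₁⟩, hmax⟩ := maxword f j₀ hne
  have h2 : (0 : MonoidAlgebra ℝ (FreeMonoid (Fin g ⊕ Fin g))).coeff (ncS w * w)
      = ∑ j, ((f j).coeff w) ^ 2 := by
    rw [h]; exact sos_coeff f w hmax
  have := sos_pos f w j₁ hj₁
  rw [← h2] at this
  simp at this

lemma truncPoly_eq (c : TruncWord g k → ℝ) :
    truncPoly c = ∑ w : Wrd g (2 * k), MonoidAlgebra.single (wrd w) (c w) := rfl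

/-- the linear coefficient-extraction map from Gram matrices -/
noncomputable def coeffT (G : Wrd g k → Wrd g k → ℝ) : TruncWord g k → ℝ :=
  fun w => (gram G).coeff (wrd (K := 2 * k) w)

lemma gram_eq_truncPoly (G : Wrd g k → Wrd g k → ℝ) :
    truncPoly (coeffT G) = gram G := by
  rw [truncPoly_eq]
  exact reconstruct (gram G) (gram_support G)

lemma coeffT_isLinear : IsLinearMap ℝ (coeffT (g := g) (k := k)) := by
  constructor
  · intro G G'
    funext w
    show (gram (fun a b => G a b + G' a b)).coeff (wrd w) = _
    rw [gram_add, MonoidAlgebra.coeff_add]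
    exact Finsupp.add_apply _ _ _
  · intro t G
    funext w
    show (gram (fun a b => t * G a b)).coeff (wrd w) = _
    rw [gram_smul, MonoidAlgebra.coeff_smul, Finsupp.smul_apply, smul_eq_mul]
    rfl

lemma S_eq :
    {c : TruncWord g k → ℝ |
        ∃ (N : ℕ) (f : Fin N → MonoidAlgebra ℝ (FreeMonoid (Fin g ⊕ Fin g))),
          truncPoly c = ∑ j, ncStar (f j) * f j}
      = coeffT '' {G : Wrd g k → Wrd g k → ℝ | (Matrix.of G).PosSemidef} := by
  ext c
  constructor
  · rintro ⟨N, f, h⟩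
    have hdeg := deg_bound c f h
    set v : Fin N → Wrd g k → ℝ := fun j a => (f j).coeff (wrd a) with hv
    have hfv : ∀ j, vecPoly (v j) = f j := fun j => reconstruct (f j) (hdeg j)
    refine ⟨fun a b => ∑ j, v j a * v j b, psd_of_decomp v, ?_⟩
    have hg : gram (fun a b => ∑ j, v j a * v j b) = truncPoly c := by
      rw [gram_sum (fun j a b => v j a * v j b)]
      rw [h]
      exact Finset.sum_congr rfl fun j _ => by rw [← hfv j, sq_eq_gram]
    funext w
    show (gram _).coeff (wrd (K := 2 * k) w) = c w
    rw [hg, truncPoly_eq]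
    exact sum_single_apply (K := 2 * k) c w
  · rintro ⟨G, hG, rfl⟩
    obtain ⟨B, hB⟩ := psd_decomp G hG
    set N := Fintype.card (Wrd g k) with hN
    set e : Fin N ≃ Wrd g k := (Fintype.equivFin (Wrd g k)).symm with he
    refine ⟨N, fun j => vecPoly (fun a => B (e j) a), ?_⟩
    rw [gram_eq_truncPoly]
    have h1 : ∑ j : Fin N, ncStar (vecPoly (fun a => B (e j) a))
          * vecPoly (fun a => B (e j) a)
        = ∑ z : Wrd g k, ncStar (vecPoly (fun a => B z a)) * vecPoly (fun a => B z a) :=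
      Fintype.sum_equiv e _ _ (fun j => rfl)
    rw [h1]
    have h2 : ∀ z : Wrd g k, ncStar (vecPoly (fun a => B z a)) * vecPoly (fun a => B z a)
        = gram (fun a b => B z a * B z b) := fun z => sq_eq_gram _
    rw [Finset.sum_congr rfl fun z _ => h2 z, ← gram_sum (fun z a b => B z a * B z b)]
    congr 1
    funext a b
    exact hB a b

lemma coeffT_ker (G : Wrd g k → Wrd g k → ℝ) (hG : (Matrix.of G).PosSemidef)
    (h : coeffT G = 0) : G = 0 := by
  have hg : gram G = 0 := by
    rw [← gram_eq_truncPoly, h]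
    rw [truncPoly_eq]
    exact Finset.sum_eq_zero fun w _ => by simp
  obtain ⟨B, hB⟩ := psd_decomp G hG
  have h1 : gram G = ∑ z : Wrd g k, ncStar (vecPoly (fun a => B z a))
      * vecPoly (fun a => B z a) := by
    have h2 : ∀ z : Wrd g k, ncStar (vecPoly (fun a => B z a)) * vecPoly (fun a => B z a)
        = gram (fun a b => B z a * B z b) := fun z => sq_eq_gram _
    rw [Finset.sum_congr rfl fun z _ => h2 z, ← gram_sum (fun z a b => B z a * B z b)]
    congr 1
    funext a b
    exact hB a b
  have h3 := sos_zero (ι := Wrd g k) (fun z => vecPoly (fun a => B z a)) (hg ▸ h1)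
  have h4 : ∀ z a, B z a = 0 := by
    intro z a
    have h5 : (vecPoly (fun a => B z a)).coeff (wrd a) = B z a :=
      sum_single_apply (K := k) (fun a => B z a) a
    have h6 : vecPoly (fun a => B z a) = 0 := h3 z
    rw [h6] at h5
    simpa using h5.symm
  funext a b
  rw [hB a b]
  simp [h4]

end Assembly


/-- Helton's separation step: the truncated sums-of-squares cone `Σ²₂ₖ` of the free
`*`-algebra, viewed in the finite-dimensional coordinate space of polynomials of degree
at most `2k`, is a closed convex cone. -/
theorem stmt_17 (g k : ℕ) :
    IsClosed {c : TruncWord g k → ℝ |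
        ∃ (N : ℕ) (f : Fin N → MonoidAlgebra ℝ (FreeMonoid (Fin g ⊕ Fin g))),
          truncPoly c = ∑ j, ncStar (f j) * f j} ∧
    Convex ℝ {c : TruncWord g k → ℝ |
        ∃ (N : ℕ) (f : Fin N → MonoidAlgebra ℝ (FreeMonoid (Fin g ⊕ Fin g))),
          truncPoly c = ∑ j, ncStar (f j) * f j} ∧
    ∀ (t : ℝ), 0 ≤ t → ∀ c ∈ {c : TruncWord g k → ℝ |
        ∃ (N : ℕ) (f : Fin N → MonoidAlgebra ℝ (FreeMonoid (Fin g ⊕ Fin g))),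
          truncPoly c = ∑ j, ncStar (f j) * f j}, t • c ∈ {c : TruncWord g k → ℝ |
        ∃ (N : ℕ) (f : Fin N → MonoidAlgebra ℝ (FreeMonoid (Fin g ⊕ Fin g))),
          truncPoly c = ∑ j, ncStar (f j) * f j} := by
  have hlin := coeffT_isLinear (g := g) (k := k)
  set T : ((Wrd g k → Wrd g k → ℝ)) →ₗ[ℝ] (TruncWord g k → ℝ) :=
    IsLinearMap.mk' _ hlin with hT
  have hset : {c : TruncWord g k → ℝ |
        ∃ (N : ℕ) (f : Fin N → MonoidAlgebra ℝ (FreeMonoid (Fin g ⊕ Fin g))),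
          truncPoly c = ∑ j, ncStar (f j) * f j}
      = ⇑T '' {G : Wrd g k → Wrd g k → ℝ | (Matrix.of G).PosSemidef} := S_eq
  refine ⟨?_, ?_, ?_⟩
  · rw [hset]
    exact closed_image_of_cone T _ psd_isClosed
      (fun t ht G hG => psd_smul t ht G hG)
      (fun G hG h0 => coeffT_ker G hG h0)
  · rw [hset]
    exact psd_convex.linear_image T
  · intro t ht c hc
    rw [hset] at hc ⊢
    obtain ⟨G, hG, rfl⟩ := hc
    exact ⟨t • G, psd_smul t ht G hG, hlin.map_smul t G⟩
end
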